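/- arXiv:2604.16526 — 6 statements merged into one kernel-verified Lean document; each statement's English description precedes it below -/
import Mathlib

section
/- Let A be a real n×n matrix that is positive stable. Then A is D-stable if and only if for every n×n diagonal matrix D with strictly positive diagonal entries one has det(A + iD) ≠ 0 and det(A − iD) ≠ 0, the determinants being taken over ℂ. -/
open Matrix

/-- A real square matrix is (positive) stable if every eigenvalue `μ` of it,
viewed as a complex matrix, satisfies `0 < Re μ`. -/
def IsPosStable {m : ℕ} (M : Matrix (Fin m) (Fin m) ℝ) : Prop :=
  ∀ μ ∈ spectrum ℂ (M.map (fun x => (x : ℂ))), 0 < μ.re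

/-- A real square matrix `A` is `D`-stable if `D * A` is positive stable for every
diagonal matrix `D` with strictly positive diagonal entries. -/
def IsDStable {m : ℕ} (A : Matrix (Fin m) (Fin m) ℝ) : Prop :=
  ∀ d : Fin m → ℝ, (∀ i, 0 < d i) → IsPosStable (Matrix.diagonal d * A)



lemma memSpec_iff_det {m : ℕ} (M : Matrix (Fin m) (Fin m) ℂ) (μ : ℂ) :
    μ ∈ spectrum ℂ M ↔ (μ • (1 : Matrix (Fin m) (Fin m) ℂ) - M).det = 0 := by
  rw [spectrum.mem_iff, Matrix.isUnit_iff_isUnit_det, isUnit_iff_ne_zero, not_ne_iff,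
    Algebra.algebraMap_eq_smul_one]

lemma charpoly_eval {m : ℕ} (M : Matrix (Fin m) (Fin m) ℂ) (z : ℂ) :
    (M.charpoly).eval z = (z • (1 : Matrix (Fin m) (Fin m) ℂ) - M).det := by
  rw [Matrix.charpoly, eval_det, Matrix.matPolyEquiv_charmatrix]
  congr 1
  ext i j
  simp [Matrix.scalar, Matrix.smul_apply, Matrix.one_apply, Matrix.diagonal]

lemma root_norm_bound {m : ℕ} (M : Matrix (Fin m) (Fin m) ℂ) (μ : ℂ)
    (h : (μ • (1 : Matrix (Fin m) (Fin m) ℂ) - M).det = 0) :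
    ‖μ‖ ≤ ∑ i, ∑ j, ‖M i j‖ := by
  obtain ⟨v, hv, hMv⟩ := (Matrix.exists_mulVec_eq_zero_iff).2 h
  have hvm : ∀ k, μ * v k = ∑ j, M k j * v j := by
    intro k
    have h0 : ((μ • (1 : Matrix (Fin m) (Fin m) ℂ) - M).mulVec v) k = 0 := congrFun hMv k
    rw [Matrix.sub_mulVec, Matrix.smul_mulVec, Matrix.one_mulVec, Pi.sub_apply,
      sub_eq_zero] at h0
    simpa [Matrix.mulVec, dotProduct] using h0
  obtain ⟨i, -, hi⟩ := Finset.exists_max_image Finset.univ (fun k => ‖v k‖)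
    (by
      obtain ⟨k, hk⟩ := Function.ne_iff.1 hv
      exact ⟨k, Finset.mem_univ k⟩)
  have hvi : 0 < ‖v i‖ := by
    obtain ⟨k, hk⟩ := Function.ne_iff.1 hv
    have := hi k (Finset.mem_univ k)
    have : 0 < ‖v k‖ := by simpa [norm_pos_iff] using hk
    linarith [hi k (Finset.mem_univ k)]
  have key : ‖μ‖ * ‖v i‖ ≤ (∑ j, ‖M i j‖) * ‖v i‖ := by
    calc ‖μ‖ * ‖v i‖ = ‖μ * v i‖ := (norm_mul _ _).symm
    _ = ‖∑ j, M i j * v j‖ := by rw [hvm i]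
    _ ≤ ∑ j, ‖M i j * v j‖ := norm_sum_le _ _
    _ ≤ ∑ j, ‖M i j‖ * ‖v i‖ := by
        refine Finset.sum_le_sum fun j _ => ?_
        rw [norm_mul]
        exact mul_le_mul_of_nonneg_left (hi j (Finset.mem_univ j)) (norm_nonneg _)
    _ = (∑ j, ‖M i j‖) * ‖v i‖ := (Finset.sum_mul _ _ _).symm
  have h1 : ‖μ‖ ≤ ∑ j, ‖M i j‖ := le_of_mul_le_mul_right key hvi
  refine h1.trans ?_
  exact Finset.single_le_sum (f := fun k => ∑ j, ‖M k j‖)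
    (fun k _ => Finset.sum_nonneg fun j _ => norm_nonneg _) (Finset.mem_univ i)

lemma prod_norm_ge {ε : ℝ} (hε : 0 ≤ ε) (s : Multiset ℂ) (h : ∀ x ∈ s, ε ≤ ‖x‖) :
    ε ^ (Multiset.card s) ≤ ‖s.prod‖ := by
  induction s using Multiset.induction with
  | empty => simp
  | cons a s ih =>
      simp only [Multiset.prod_cons, Multiset.card_cons, pow_succ, norm_mul]
      rw [mul_comm (ε ^ Multiset.card s) ε]
      exact mul_le_mul (h a (Multiset.mem_cons_self a s))
        (ih fun x hx => h x (Multiset.mem_cons_of_mem hx))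
        (pow_nonneg hε _) (norm_nonneg _)

lemma exists_root_near {m : ℕ} (M : Matrix (Fin m) (Fin m) ℂ) (z : ℂ) (ε : ℝ) (hε : 0 < ε)
    (h : ‖(z • (1 : Matrix (Fin m) (Fin m) ℂ) - M).det‖ < ε ^ m) :
    ∃ μ : ℂ, (μ • (1 : Matrix (Fin m) (Fin m) ℂ) - M).det = 0 ∧ ‖z - μ‖ < ε := by
  by_contra hc
  push_neg at hc
  have hroots : ∀ r ∈ M.charpoly.roots, ε ≤ ‖z - r‖ := by
    intro r hr
    have : (M.charpoly).eval r = 0 := by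
      have := Polynomial.isRoot_of_mem_roots hr
      exact this
    rw [charpoly_eval] at this
    exact hc r this
  have hsplit : M.charpoly.Splits := IsAlgClosed.splits _
  have hcard : Multiset.card M.charpoly.roots = m := by
    rw [Polynomial.splits_iff_card_roots.1 hsplit, Matrix.charpoly_natDegree_eq_dim, Fintype.card_fin]
  have hfact : M.charpoly.eval z = ((M.charpoly.roots).map (fun a => z - a)).prod := by
    conv_lhs => rw [hsplit.eq_prod_roots_of_monic (Matrix.charpoly_monic M)]
    rw [Polynomial.eval_multiset_prod, Multiset.map_map]
    simp
  have hge : ε ^ m ≤ ‖M.charpoly.eval z‖ := by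
    rw [hfact]
    have := prod_norm_ge hε.le ((M.charpoly.roots).map (fun a => z - a))
      (by intro x hx; obtain ⟨r, hr, rfl⟩ := Multiset.mem_map.1 hx; exact hroots r hr)
    simpa [hcard] using this
  rw [charpoly_eval] at hge
  linarith

lemma map_diag_mul {m : ℕ} (e : Fin m → ℝ) (A : Matrix (Fin m) (Fin m) ℝ) :
    (Matrix.diagonal e * A).map (fun x => (x : ℂ)) =
      Matrix.diagonal (fun i => (e i : ℂ)) * A.map (fun x => (x : ℂ)) := by
  ext i j
  simp [Matrix.map_apply, Matrix.diagonal_mul]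

lemma key_det {m : ℕ} (B : Matrix (Fin m) (Fin m) ℂ) (e : Fin m → ℝ) (he : ∀ i, 0 < e i)
    (b : ℝ) :
    ((Complex.I * b) • (1 : Matrix (Fin m) (Fin m) ℂ)
        - Matrix.diagonal (fun i => (e i : ℂ)) * B).det = 0 ↔
      (B - Complex.I • Matrix.diagonal (fun i => ((b / e i : ℝ) : ℂ))).det = 0 := by
  have hfac : (Complex.I * b) • (1 : Matrix (Fin m) (Fin m) ℂ)
        - Matrix.diagonal (fun i => (e i : ℂ)) * B =
      Matrix.diagonal (fun i => (e i : ℂ)) *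
        (-(B - Complex.I • Matrix.diagonal (fun i => ((b / e i : ℝ) : ℂ)))) := by
    rw [Matrix.mul_neg, Matrix.mul_sub, Matrix.mul_smul, Matrix.diagonal_mul_diagonal]
    have h1 : (fun i => (e i : ℂ) * ((b / e i : ℝ) : ℂ)) = fun _ => (b : ℂ) := by
      funext i
      rw [← Complex.ofReal_mul]
      congr 1
      field_simp [(he i).ne']
    rw [h1]
    have h2 : Matrix.diagonal (fun _ : Fin m => (b : ℂ)) = (b : ℂ) • 1 := by
      ext i j
      by_cases h : i = j <;> simp [Matrix.diagonal, Matrix.one_apply, h]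
    rw [h2, neg_sub, smul_smul]
  rw [hfac, Matrix.det_mul, Matrix.det_neg, Matrix.det_diagonal, mul_eq_zero, mul_eq_zero]
  have hprod : (∏ i, (e i : ℂ)) ≠ 0 :=
    Finset.prod_ne_zero_iff.2 fun i _ => by
      simpa using (he i).ne'
  have hpow : ((-1 : ℂ) ^ Fintype.card (Fin m)) ≠ 0 := pow_ne_zero _ (by norm_num)
  tauto

theorem stmt8 (n : ℕ) (A : Matrix (Fin n) (Fin n) ℝ) (hA : IsPosStable A) :
    IsDStable A ↔
      ∀ d : Fin n → ℝ, (∀ i, 0 < d i) →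
        (A.map (fun x => (x : ℂ)) +
            Complex.I • Matrix.diagonal (fun i => (d i : ℂ))).det ≠ 0 ∧
        (A.map (fun x => (x : ℂ)) -
            Complex.I • Matrix.diagonal (fun i => (d i : ℂ))).det ≠ 0 := by
  set Ac := A.map (fun x => (x : ℂ)) with hAcdef
  constructor
  · -- easy direction
    intro hD d hd
    have hinv : ∀ i, 0 < (d i)⁻¹ := fun i => inv_pos.2 (hd i)
    have hps := hD (fun i => (d i)⁻¹) hinv
    constructor
    · intro h0
      have hdiag : Matrix.diagonal (fun i => (((-1 : ℝ) / (d i)⁻¹ : ℝ) : ℂ)) =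
          -Matrix.diagonal (fun i => (d i : ℂ)) := by
        have hfun : (fun i => (((-1 : ℝ) / (d i)⁻¹ : ℝ) : ℂ)) =
            (fun i => -((d i : ℂ))) := by
          funext i
          push_cast
          rw [div_eq_mul_inv, inv_inv]
          ring
        rw [hfun]
        exact (Matrix.diagonal_neg _).symm
      have hz : (((Complex.I * ((-1 : ℝ) : ℂ)) •
          (1 : Matrix (Fin n) (Fin n) ℂ)) -
          Matrix.diagonal (fun i => (((d i)⁻¹ : ℝ) : ℂ)) * Ac).det = 0 := by
        rw [key_det Ac (fun i => (d i)⁻¹) hinv (-1)]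
        rw [hdiag, smul_neg, sub_neg_eq_add]
        exact h0
      have hmem : (Complex.I * ((-1 : ℝ) : ℂ)) ∈
          spectrum ℂ ((Matrix.diagonal (fun i => (d i)⁻¹) * A).map (fun x => (x : ℂ))) := by
        rw [map_diag_mul, memSpec_iff_det]
        exact hz
      have := hps _ hmem
      simp at this
    · intro h0
      have hdiag : Matrix.diagonal (fun i => (((1 : ℝ) / (d i)⁻¹ : ℝ) : ℂ)) =
          Matrix.diagonal (fun i => (d i : ℂ)) := by
        have hfun : (fun i => (((1 : ℝ) / (d i)⁻¹ : ℝ) : ℂ)) =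
            (fun i => ((d i : ℂ))) := by
          funext i
          push_cast
          rw [div_eq_mul_inv, inv_inv]
          ring
        rw [hfun]
      have hz : (((Complex.I * ((1 : ℝ) : ℂ)) •
          (1 : Matrix (Fin n) (Fin n) ℂ)) -
          Matrix.diagonal (fun i => (((d i)⁻¹ : ℝ) : ℂ)) * Ac).det = 0 := by
        rw [key_det Ac (fun i => (d i)⁻¹) hinv 1]
        rw [hdiag]
        exact h0
      have hmem : (Complex.I * ((1 : ℝ) : ℂ)) ∈
          spectrum ℂ ((Matrix.diagonal (fun i => (d i)⁻¹) * A).map (fun x => (x : ℂ))) := by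
        rw [map_diag_mul, memSpec_iff_det]
        exact hz
      have := hps _ hmem
      simp at this
  · -- hard direction
    intro H d hd
    intro μ hμ
    rw [map_diag_mul, memSpec_iff_det] at hμ
    set E : ℝ → Fin n → ℝ := fun t i => 1 - t + t * d i with hEdef
    set Mt : ℝ → Matrix (Fin n) (Fin n) ℂ :=
      fun t => Matrix.diagonal (fun i => (E t i : ℂ)) * Ac with hMtdef
    have hEpos : ∀ t ∈ Set.Icc (0:ℝ) 1, ∀ i, 0 < E t i := by
      intro t ht i
      have h1 := ht.1
      have h2 := ht.2
      have := hd i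
      simp only [hEdef]
      nlinarith [mul_nonneg (sub_nonneg.2 h2) (hd i).le, mul_nonneg h1 (hd i).le]
    -- no eigenvalue on the imaginary axis for t ∈ [0,1]
    have axisfree : ∀ t ∈ Set.Icc (0:ℝ) 1, ∀ z : ℂ,
        (z • (1 : Matrix (Fin n) (Fin n) ℂ) - Mt t).det = 0 → z.re ≠ 0 := by
      intro t ht z hz hre
      have hzI : z = Complex.I * (z.im : ℂ) := by
        apply Complex.ext <;> simp [hre]
      rw [hzI, hMtdef] at hz
      rw [key_det Ac (E t) (fun i => hEpos t ht i) z.im] at hz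
      rcases lt_trichotomy z.im 0 with hb | hb | hb
      · have hdiag : Matrix.diagonal (fun i => ((-z.im / E t i : ℝ) : ℂ)) =
            -Matrix.diagonal (fun i => ((z.im / E t i : ℝ) : ℂ)) := by
          have hfun : (fun i => ((-z.im / E t i : ℝ) : ℂ)) =
              (fun i => -(((z.im / E t i : ℝ) : ℂ))) := by
            funext i
            push_cast
            ring
          rw [hfun]
          exact (Matrix.diagonal_neg _).symm
        refine (H (fun i => -z.im / E t i)
          (fun i => div_pos (neg_pos.2 hb) (hEpos t ht i))).1 ?_
        rw [hdiag, smul_neg, ← sub_eq_add_neg]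
        exact hz
      · rw [hb] at hz
        have hz' : Ac.det = 0 := by
          simpa using hz
        have h0 : (0 : ℂ) ∈ spectrum ℂ Ac := by
          rw [memSpec_iff_det]
          simp [Matrix.det_neg, hz']
        simpa using hA 0 h0
      · exact (H (fun i => z.im / E t i)
          (fun i => div_pos hb (hEpos t ht i))).2 hz
    -- continuity
    have hMtcont : Continuous Mt := by
      apply continuous_matrix
      intro i j
      have : (fun t => Mt t i j) = fun t => ((E t i : ℝ) : ℂ) * Ac i j := by
        funext t
        simp [hMtdef, Matrix.diagonal_mul]
      rw [this]
      exact (Complex.continuous_ofReal.comp (by fun_prop)).mul continuous_const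
    have hF : Continuous fun p : ℝ × ℂ =>
        (p.2 • (1 : Matrix (Fin n) (Fin n) ℂ) - Mt p.1).det :=
      Continuous.matrix_det ((continuous_snd.smul continuous_const).sub
        (hMtcont.comp continuous_fst))
    set U : Set ℝ := {t : ℝ | ∀ z : ℂ,
      (z • (1 : Matrix (Fin n) (Fin n) ℂ) - Mt t).det = 0 → 0 < z.re} with hUdef
    set V : Set ℝ := {t : ℝ | ∃ z : ℂ,
      (z • (1 : Matrix (Fin n) (Fin n) ℂ) - Mt t).det = 0 ∧ z.re < 0} with hVdef
    have isOpenV : IsOpen V := by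
      rw [isOpen_iff_forall_mem_open]
      rintro t₀ ⟨z₀, hz₀, hre⟩
      have hεpos : (0:ℝ) < -z₀.re := by linarith
      refine ⟨(fun t => (z₀ • (1 : Matrix (Fin n) (Fin n) ℂ) - Mt t).det) ⁻¹'
        Metric.ball 0 ((-z₀.re) ^ n), ?_, ?_, ?_⟩
      · intro t ht
        have ht' : ‖(z₀ • (1 : Matrix (Fin n) (Fin n) ℂ) - Mt t).det‖ < (-z₀.re) ^ n := by
          simpa [Metric.mem_ball, dist_zero_right] using ht
        obtain ⟨z, hdetz, hnear⟩ := exists_root_near (Mt t) z₀ (-z₀.re) hεpos ht'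
        refine ⟨z, hdetz, ?_⟩
        have h1 : |(z₀ - z).re| ≤ ‖z₀ - z‖ := Complex.abs_re_le_norm _
        have h2 : (z₀ - z).re = z₀.re - z.re := by simp [Complex.sub_re]
        have h3 := (abs_le.1 h1).1
        rw [h2] at h3
        linarith
      · exact (Continuous.matrix_det (continuous_const.sub hMtcont)).isOpen_preimage
          _ Metric.isOpen_ball
      · simp [Set.mem_preimage, Metric.mem_ball, hz₀, pow_pos hεpos]
    have isOpenU : IsOpen U := by
      rw [isOpen_iff_forall_mem_open]
      intro t₀ ht₀
      set C : ℝ := ∑ i, ∑ j, ((2 + |t₀|) * (1 + d i) * ‖Ac i j‖) with hCdef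
      set K : Set ℂ := Metric.closedBall (0:ℂ) C ∩ {z : ℂ | z.re ≤ 0} with hKdef
      have hK : IsCompact K := (isCompact_closedBall (0:ℂ) C).inter_right
        (isClosed_le Complex.continuous_re continuous_const)
      have hN : IsOpen ((fun p : ℝ × ℂ =>
          (p.2 • (1 : Matrix (Fin n) (Fin n) ℂ) - Mt p.1).det) ⁻¹' {(0:ℂ)}ᶜ) :=
        hF.isOpen_preimage _ isOpen_compl_singleton
      have hsub : ({t₀} : Set ℝ) ×ˢ K ⊆ (fun p : ℝ × ℂ =>
          (p.2 • (1 : Matrix (Fin n) (Fin n) ℂ) - Mt p.1).det) ⁻¹' {(0:ℂ)}ᶜ := by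
        rintro ⟨a, z⟩ ⟨ha, hzK⟩
        simp only [Set.mem_singleton_iff] at ha
        subst ha
        intro hdet
        simp only [Set.mem_singleton_iff] at hdet
        have := ht₀ z hdet
        have := hzK.2
        simp only [Set.mem_setOf_eq] at this
        linarith
      obtain ⟨u, v, hu, hv, htu, hKv, huv⟩ :=
        generalized_tube_lemma isCompact_singleton hK hN hsub
      refine ⟨u ∩ Metric.ball t₀ 1, ?_, hu.inter Metric.isOpen_ball,
        ⟨htu rfl, Metric.mem_ball_self one_pos⟩⟩
      rintro t ⟨htu', htb⟩ z hz
      by_contra hre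
      push_neg at hre
      have hb : ‖z‖ ≤ ∑ i, ∑ j, ‖Mt t i j‖ := root_norm_bound _ _ hz
      have hbound : ∑ i, ∑ j, ‖Mt t i j‖ ≤ C := by
        rw [hCdef]
        refine Finset.sum_le_sum fun i _ => Finset.sum_le_sum fun j _ => ?_
        have hMtij : Mt t i j = ((E t i : ℝ) : ℂ) * Ac i j := by
          simp [hMtdef, Matrix.diagonal_mul]
        rw [hMtij, norm_mul, Complex.norm_real, Real.norm_eq_abs]
        have h1 : |t - t₀| < 1 := by
          simpa [Real.dist_eq] using (Metric.mem_ball.1 htb)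
        have ht1 : |t| ≤ |t₀| + 1 := by
          have := abs_sub_abs_le_abs_sub t t₀
          linarith
        have h3 : |1 - t| ≤ 1 + |t| := by
          have := abs_add_le (1:ℝ) (-t)
          simpa [sub_eq_add_neg] using this
        have h2 : |E t i| ≤ (2 + |t₀|) * (1 + d i) := by
          have habs : |E t i| ≤ |1 - t| + |t| * d i := by
            have hE : E t i = (1 - t) + t * d i := by simp [hEdef]
            rw [hE]
            refine (abs_add_le _ _).trans ?_
            rw [abs_mul, abs_of_pos (hd i)]
          nlinarith [hd i, abs_nonneg t, abs_nonneg t₀, abs_nonneg (1 - t)]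
        exact mul_le_mul_of_nonneg_right h2 (norm_nonneg _)
      have hzK : z ∈ K := by
        refine ⟨Metric.mem_closedBall.2 ?_, hre⟩
        rw [dist_zero_right]
        exact hb.trans hbound
      have hmemN := huv (Set.mk_mem_prod htu' (hKv hzK))
      exact hmemN hz
    have hdisj : Disjoint U V := by
      rw [Set.disjoint_left]
      rintro t htU ⟨z, hdet, hre⟩
      have := htU z hdet
      linarith
    have hcover : Set.Icc (0:ℝ) 1 ⊆ U ∪ V := by
      intro t ht
      by_cases h : ∀ z : ℂ, (z • (1 : Matrix (Fin n) (Fin n) ℂ) - Mt t).det = 0 → 0 < z.re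
      · exact Or.inl h
      · push_neg at h
        obtain ⟨z, hdet, hle⟩ := h
        refine Or.inr ⟨z, hdet, ?_⟩
        rcases lt_or_eq_of_le hle with h' | h'
        · exact h'
        · exact absurd h' (axisfree t ht z hdet)
    have h0U : (0:ℝ) ∈ U := by
      intro z hz
      have hMt0 : Mt 0 = Ac := by
        have : (fun i => ((E 0 i : ℝ) : ℂ)) = fun _ => (1:ℂ) := by
          funext i; simp [hEdef]
        simp [hMtdef, this, Matrix.diagonal_one]
      rw [hMt0] at hz
      exact hA z ((memSpec_iff_det Ac z).2 hz)
    have hIccU : Set.Icc (0:ℝ) 1 ⊆ U :=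
      isPreconnected_Icc.subset_left_of_subset_union isOpenU isOpenV hdisj hcover
        ⟨0, Set.mem_Icc.2 ⟨le_refl 0, zero_le_one⟩, h0U⟩
    have h1U : (1:ℝ) ∈ U := hIccU (Set.mem_Icc.2 ⟨zero_le_one, le_refl 1⟩)
    have hMt1 : Mt 1 = Matrix.diagonal (fun i => (d i : ℂ)) * Ac := by
      have : (fun i => ((E 1 i : ℝ) : ℂ)) = fun i => (d i : ℂ) := by
        funext i; simp [hEdef]
      simp [hMtdef, this]
    exact h1U μ (by rw [hMt1]; exact hμ)
end

section
/- Let A be a real n×n matrix that is positive stable. For d = (d₁,…,dₙ) ∈ ℝⁿ let P(d) = Re(det(A + i·diag(d₁,…,dₙ))) and Q(d) = Im(det(A + i·diag(d₁,…,dₙ))). Then A is D-stable if and only if P(d)² + Q(d)² > 0 for every d with dⱼ > 0 for all j = 1,…,n. -/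
open Matrix

section
open Matrix Polynomial Filter Topology Metric
noncomputable section
namespace Stmt9Aux
variable {n : ℕ}


lemma nnnorm_msprod (s : Multiset ℂ) : ‖s.prod‖₊ = (s.map fun z => ‖z‖₊).prod := by
  induction s using Multiset.induction with
  | empty => simp
  | cons a s ih => simp [nnnorm_mul, ih]

lemma exists_root_near (p : ℂ[X]) (hm : p.Monic) (hd : 0 < p.natDegree) (z : ℂ) :
    ∃ w ∈ p.roots, ‖z - w‖ ^ p.natDegree ≤ ‖p.eval z‖ := by
  have hsplit : p.Splits := IsAlgClosed.splits p
  have hcard : Multiset.card p.roots = p.natDegree := (Polynomial.splits_iff_card_roots).mp hsplit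
  have hp := hsplit.eq_prod_roots_of_monic hm
  have heval : ‖p.eval z‖₊ = ((p.roots.map fun w => ‖z - w‖₊)).prod := by
    conv_lhs => rw [hp, Polynomial.eval_multiset_prod]
    rw [nnnorm_msprod, Multiset.map_map, Multiset.map_map]
    congr 1
    exact Multiset.map_congr rfl fun w _ => by simp [Function.comp]
  have hne : p.roots.toFinset.Nonempty := by
    obtain ⟨r, hr⟩ := Multiset.exists_mem_of_ne_zero
      (show p.roots ≠ 0 by rw [← Multiset.card_pos, hcard]; exact hd)
    exact ⟨r, Multiset.mem_toFinset.mpr hr⟩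
  obtain ⟨w₀, hw₀, hmin⟩ := p.roots.toFinset.exists_min_image (fun w => ‖z - w‖₊) hne
  refine ⟨w₀, Multiset.mem_toFinset.mp hw₀, ?_⟩
  have key : ‖z - w₀‖₊ ^ p.natDegree ≤ ‖p.eval z‖₊ := by
    rw [heval, ← hcard, ← Multiset.card_map (fun w => ‖z - w‖₊) p.roots]
    refine Multiset.pow_card_le_prod fun x hx => ?_
    obtain ⟨w, hw, rfl⟩ := Multiset.mem_map.mp hx
    exact hmin w (Multiset.mem_toFinset.mpr hw)
  exact_mod_cast key

section NormBound
attribute [local instance] Matrix.linftyOpNormedRing Matrix.linftyOpNormedAlgebra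

lemma root_norm_bound (hn : 0 < n) (M : Matrix (Fin n) (Fin n) ℂ) (z : ℂ)
    (h : (z • (1 : Matrix (Fin n) (Fin n) ℂ) - M).det = 0) {C : ℝ}
    (hC : ∀ i, ∑ j, ‖M i j‖ ≤ C) : ‖z‖ ≤ C := by
  haveI : Nonempty (Fin n) := ⟨⟨0, hn⟩⟩
  have hC0 : 0 ≤ C := le_trans (by positivity) (hC ⟨0, hn⟩)
  have hz : z ∈ spectrum ℂ M := by
    rw [spectrum.mem_iff, Matrix.isUnit_iff_isUnit_det, isUnit_iff_ne_zero, not_ne_iff,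
      Algebra.algebraMap_eq_smul_one]
    exact h
  have h2 : ‖M‖₊ ≤ C.toNNReal := by
    rw [Matrix.linfty_opNNNorm_def]
    refine Finset.sup_le fun i _ => ?_
    rw [Real.le_toNNReal_iff_coe_le hC0]
    push_cast
    simpa using hC i
  calc ‖z‖ ≤ ‖M‖ := spectrum.norm_le_norm_of_mem hz
    _ = (‖M‖₊ : ℝ) := rfl
    _ ≤ (C.toNNReal : ℝ) := by exact_mod_cast h2
    _ = C := Real.coe_toNNReal C hC0
end NormBound



lemma eval_charpoly_det (M : Matrix (Fin n) (Fin n) ℂ) (z : ℂ) :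
    M.charpoly.eval z = (z • (1 : Matrix (Fin n) (Fin n) ℂ) - M).det := by
  rw [Matrix.charpoly, eval_det, matPolyEquiv_charmatrix]
  congr 1
  rw [Polynomial.eval_sub, Polynomial.eval_X, Polynomial.eval_C]
  congr 1
  ext i j
  simp [Matrix.scalar, Matrix.smul_apply, Matrix.one_apply, Matrix.diagonal_apply]

lemma mem_spectrum_iff_det (M : Matrix (Fin n) (Fin n) ℂ) (z : ℂ) :
    z ∈ spectrum ℂ M ↔ (z • (1 : Matrix (Fin n) (Fin n) ℂ) - M).det = 0 := by
  rw [spectrum.mem_iff, Matrix.isUnit_iff_isUnit_det, isUnit_iff_ne_zero, not_ne_iff,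
    Algebra.algebraMap_eq_smul_one]


end Stmt9Aux
end
end


set_option maxHeartbeats 1000000 in
theorem stmt9 (n : ℕ) (A : Matrix (Fin n) (Fin n) ℝ) (hA : IsPosStable A) :
    IsDStable A ↔
      ∀ d : Fin n → ℝ, (∀ j, 0 < d j) →
        0 < (A.map (fun x => (x : ℂ)) +
              Complex.I • Matrix.diagonal (fun i => (d i : ℂ))).det.re ^ 2 +
            (A.map (fun x => (x : ℂ)) +
              Complex.I • Matrix.diagonal (fun i => (d i : ℂ))).det.im ^ 2 := by
  classical
  have hdet_iff : ∀ z : ℂ, (0 < z.re ^ 2 + z.im ^ 2) ↔ z ≠ 0 := fun z => by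
    rw [show z.re ^ 2 + z.im ^ 2 = Complex.normSq z by simp [Complex.normSq_apply, sq],
      Complex.normSq_pos]
  set A' : Matrix (Fin n) (Fin n) ℂ := A.map (fun x => (x : ℂ)) with hA'
  rcases Nat.eq_zero_or_pos n with hn | hn
  · subst hn
    constructor
    · intro _ d _
      rw [hdet_iff]
      intro h
      have : ((A' + Complex.I • Matrix.diagonal (fun i => (d i : ℂ))).det) = 1 :=
        Matrix.det_fin_zero
      rw [this] at h
      exact one_ne_zero h
    · intro _ d _ μ hμ
      exfalso
      rw [spectrum.mem_iff] at hμ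
      exact hμ (isUnit_of_subsingleton _)
  · haveI : Nonempty (Fin n) := ⟨⟨0, hn⟩⟩
    -- det A' ≠ 0
    have hdetA : A'.det ≠ 0 := by
      intro h0
      have h1 : ((0 : ℂ) • (1 : Matrix (Fin n) (Fin n) ℂ) - A').det = 0 := by
        rw [zero_smul, zero_sub, Matrix.det_neg, h0, mul_zero]
      have h2 := hA 0 ((Stmt9Aux.mem_spectrum_iff_det A' 0).mpr h1)
      simp at h2
    constructor
    · -- forward
      intro hDS d hd
      rw [hdet_iff]
      intro h0
      have hdpos : ∀ i, 0 < (d i)⁻¹ := fun i => inv_pos.mpr (hd i)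
      have hkey : ((-Complex.I) • (1 : Matrix (Fin n) (Fin n) ℂ) -
          (Matrix.diagonal (fun i => (d i)⁻¹) * A).map (fun x => (x : ℂ))) =
          (-1 : ℂ) • (Matrix.diagonal (fun i => ((d i)⁻¹ : ℂ)) *
            (A' + Complex.I • Matrix.diagonal (fun i => (d i : ℂ)))) := by
        have hmap : (Matrix.diagonal (fun i => (d i)⁻¹) * A).map (fun x => (x : ℂ)) =
            Matrix.diagonal (fun i => ((d i)⁻¹ : ℂ)) * A' := by
          ext i j
          simp only [Matrix.map_apply, Matrix.diagonal_mul, hA']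
          push_cast
          ring
        rw [hmap, mul_add, mul_smul_comm, Matrix.diagonal_mul_diagonal]
        have : Matrix.diagonal (fun i => ((d i)⁻¹ : ℂ) * (d i : ℂ)) = 1 := by
          rw [show (fun i => ((d i)⁻¹ : ℂ) * (d i : ℂ)) = fun _ => (1 : ℂ) from
            funext fun i => by
              rw [inv_mul_cancel₀]
              exact_mod_cast (hd i).ne', Matrix.diagonal_one]
        rw [this]
        rw [neg_one_smul, neg_add, sub_eq_add_neg, ← neg_smul]
        exact add_comm _ _
      have hdd : ((-Complex.I) • (1 : Matrix (Fin n) (Fin n) ℂ) -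
          (Matrix.diagonal (fun i => (d i)⁻¹) * A).map (fun x => (x : ℂ))).det = 0 := by
        rw [hkey, Matrix.det_smul, Matrix.det_mul, h0, mul_zero, mul_zero]
      have hmem := (Stmt9Aux.mem_spectrum_iff_det _ (-Complex.I)).mpr hdd
      have := hDS (fun i => (d i)⁻¹) hdpos (-Complex.I) hmem
      simp at this
    · intro hRHS
      have hdet : ∀ d' : Fin n → ℝ, (∀ j, 0 < d' j) →
          (A' + Complex.I • Matrix.diagonal (fun i => (d' i : ℂ))).det ≠ 0 :=
        fun d' hd' => (hdet_iff _).mp (hRHS d' hd')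
      intro d hd
      set er : ℝ → Fin n → ℝ := fun t i => 1 - t + t * d i with her
      have hepos : ∀ t ∈ Set.Icc (0:ℝ) 1, ∀ i, 0 < er t i := by
        intro t ht i
        rcases ht.1.eq_or_lt with h | h
        · simp [her, ← h]
        · exact add_pos_of_nonneg_of_pos (sub_nonneg.mpr ht.2) (mul_pos h (hd i))
      set M : ℝ → Matrix (Fin n) (Fin n) ℂ :=
        fun t => Matrix.diagonal (fun i => (er t i : ℂ)) * A' with hM
      have key_ne : ∀ t ∈ Set.Icc (0:ℝ) 1, ∀ β : ℝ,
          ((((β : ℂ) * Complex.I)) • (1 : Matrix (Fin n) (Fin n) ℂ) - M t).det ≠ 0 := by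
        intro t ht β
        have he := hepos t ht
        have hec : ∀ i, ((er t i : ℝ) : ℂ) ≠ 0 := fun i => by
          exact_mod_cast (he i).ne'
        have hfac : (((β : ℂ) * Complex.I) • (1 : Matrix (Fin n) (Fin n) ℂ) - M t) =
            Matrix.diagonal (fun i => (er t i : ℂ)) *
              (((β : ℂ) * Complex.I) • Matrix.diagonal (fun i => ((er t i : ℂ))⁻¹) - A') := by
          rw [mul_sub, mul_smul_comm, Matrix.diagonal_mul_diagonal,
            show (fun i => (er t i : ℂ) * ((er t i : ℂ))⁻¹) = fun _ => (1:ℂ) from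
              funext fun i => mul_inv_cancel₀ (hec i),
            Matrix.diagonal_one]
        rw [hfac, Matrix.det_mul, mul_ne_zero_iff, Matrix.det_diagonal]
        refine ⟨Finset.prod_ne_zero_iff.mpr fun i _ => hec i, ?_⟩
        have hdiag : ((β : ℂ) * Complex.I) • Matrix.diagonal (fun i => ((er t i : ℂ))⁻¹) =
            Complex.I • Matrix.diagonal (fun i => ((β * (er t i)⁻¹ : ℝ) : ℂ)) := by
          ext i j
          by_cases hij : i = j <;>
            simp [hij, Matrix.diagonal_apply, Matrix.smul_apply] <;> push_cast <;> ring
        rw [hdiag]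
        set q : Fin n → ℝ := fun i => β * (er t i)⁻¹ with hq
        have hrw : (fun i => ((β * (er t i)⁻¹ : ℝ) : ℂ)) = fun i => ((q i : ℝ) : ℂ) := rfl
        rw [hrw]
        rcases lt_trichotomy β 0 with hβ | hβ | hβ
        · have hqpos : ∀ i, 0 < -q i := fun i => by
            have : q i < 0 := mul_neg_of_neg_of_pos hβ (inv_pos.mpr (he i))
            linarith
          have heq : Complex.I • Matrix.diagonal (fun i => ((q i : ℝ) : ℂ)) - A' =
              -(A' + Complex.I • Matrix.diagonal (fun i => ((-q i : ℝ) : ℂ))) := by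
            have hneg : Matrix.diagonal (fun i => ((-q i : ℝ) : ℂ)) =
                -Matrix.diagonal (fun i => ((q i : ℝ) : ℂ)) := by
              rw [show (fun i => ((-q i : ℝ) : ℂ)) = fun i => -((q i : ℝ) : ℂ) from
                funext fun i => by push_cast; ring, Matrix.diagonal_neg]
            rw [hneg, smul_neg]
            abel
          rw [heq, Matrix.det_neg]
          exact mul_ne_zero (pow_ne_zero _ (neg_ne_zero.mpr one_ne_zero)) (hdet _ hqpos)
        · have hq0 : (fun i => ((q i : ℝ) : ℂ)) = fun _ => (0:ℂ) :=
            funext fun i => by simp [hq, hβ]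
          rw [hq0]
          simp only [Matrix.diagonal_zero, smul_zero, zero_sub]
          rw [Matrix.det_neg]
          exact mul_ne_zero (pow_ne_zero _ (neg_ne_zero.mpr one_ne_zero)) hdetA
        · have hqpos : ∀ i, 0 < q i := fun i => mul_pos hβ (inv_pos.mpr (he i))
          have hconj : (A' + Complex.I • Matrix.diagonal (fun i => ((q i : ℝ) : ℂ))).map
              (starRingEnd ℂ) = A' - Complex.I • Matrix.diagonal (fun i => ((q i : ℝ) : ℂ)) := by
            ext i j
            by_cases hij : i = j <;>
              simp [hij, Matrix.map_apply, Matrix.diagonal_apply, hA', Matrix.smul_apply,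
                Complex.conj_ofReal, _root_.map_add, _root_.map_mul, Complex.conj_I] <;> ring
          have heq : Complex.I • Matrix.diagonal (fun i => ((q i : ℝ) : ℂ)) - A' =
              -(A' - Complex.I • Matrix.diagonal (fun i => ((q i : ℝ) : ℂ))) := by abel
          have hdet3 : (A' - Complex.I • Matrix.diagonal (fun i => ((q i : ℝ) : ℂ))).det =
              (starRingEnd ℂ) ((A' + Complex.I •
                Matrix.diagonal (fun i => ((q i : ℝ) : ℂ))).det) := by
            rw [← hconj, ← RingHom.mapMatrix_apply]
            exact (RingHom.map_det _ _).symm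
          rw [heq, Matrix.det_neg, hdet3]
          refine mul_ne_zero (pow_ne_zero _ (neg_ne_zero.mpr one_ne_zero)) ?_
          simpa using hdet q hqpos
      have key_re_ne : ∀ t ∈ Set.Icc (0:ℝ) 1, ∀ z : ℂ,
          (z • (1 : Matrix (Fin n) (Fin n) ℂ) - M t).det = 0 → z.re ≠ 0 := by
        intro t ht z hz hre
        have hzeq : z = (z.im : ℂ) * Complex.I := by
          apply Complex.ext <;> simp [hre]
        rw [hzeq] at hz
        exact key_ne t ht z.im hz
      have hMcont : Continuous fun p : ℝ × ℂ =>
          (p.2 • (1 : Matrix (Fin n) (Fin n) ℂ) - M p.1).det := by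
        apply Continuous.matrix_det
        apply Continuous.sub
        · exact continuous_snd.smul continuous_const
        · apply continuous_matrix
          intro i j
          simp only [hM, Matrix.diagonal_mul, her]
          exact ((Complex.continuous_ofReal.comp
            (((continuous_const.sub continuous_fst).add
              (continuous_fst.mul continuous_const)))).mul continuous_const)
      have hmono : ∀ s : ℝ, ((M s).charpoly).Monic := fun s => (M s).charpoly_monic
      have hdeg : ∀ s : ℝ, ((M s).charpoly).natDegree = n := fun s => by
        rw [Matrix.charpoly_natDegree_eq_dim, Fintype.card_fin]
      set u : Set ℝ := {t | t ∈ Set.Icc (0:ℝ) 1 ∧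
        ∀ z : ℂ, (z • (1 : Matrix (Fin n) (Fin n) ℂ) - M t).det = 0 → 0 < z.re} with hu
      set v : Set ℝ := {t | t ∈ Set.Icc (0:ℝ) 1 ∧
        ∃ z : ℂ, (z • (1 : Matrix (Fin n) (Fin n) ℂ) - M t).det = 0 ∧ z.re < 0} with hv
      have hucl : IsClosed u := by
        apply IsSeqClosed.isClosed
        intro x t hx hlim
        have htI : t ∈ Set.Icc (0:ℝ) 1 :=
          isClosed_Icc.mem_of_tendsto hlim (Filter.Eventually.of_forall fun k => (hx k).1)
        refine ⟨htI, ?_⟩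
        intro z hz
        by_contra hle
        push_neg at hle
        have hlt : z.re < 0 := lt_of_le_of_ne hle (key_re_ne t htI z hz)
        have hcont2 : Continuous fun s : ℝ =>
            ‖(z • (1 : Matrix (Fin n) (Fin n) ℂ) - M s).det‖ :=
          (hMcont.comp (continuous_id.prodMk continuous_const)).norm
        have htend : Filter.Tendsto (fun k => ‖(z • (1 : Matrix (Fin n) (Fin n) ℂ) -
            M (x k)).det‖) Filter.atTop (nhds 0) := by
          have h0 := (hcont2.continuousAt (x := t)).tendsto.comp hlim
          simpa [hz, Function.comp_def] using h0
        have hev : ∀ᶠ k in Filter.atTop,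
            ‖(z • (1 : Matrix (Fin n) (Fin n) ℂ) - M (x k)).det‖ < (-z.re) ^ n :=
          htend.eventually (gt_mem_nhds (pow_pos (by linarith) n))
        obtain ⟨k, hk⟩ := hev.exists
        obtain ⟨w, hw, hwle⟩ := Stmt9Aux.exists_root_near ((M (x k)).charpoly)
          (hmono (x k)) (by rw [hdeg]; exact hn) z
        have hweval : ((M (x k)).charpoly).eval w = 0 := (Polynomial.mem_roots'.mp hw).2
        have hwdet : (w • (1 : Matrix (Fin n) (Fin n) ℂ) - M (x k)).det = 0 := by
          rw [← Stmt9Aux.eval_charpoly_det]; exact hweval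
        have hwre := (hx k).2 w hwdet
        rw [hdeg (x k), Stmt9Aux.eval_charpoly_det] at hwle
        have h6 : ‖z - w‖ < -z.re :=
          lt_of_pow_lt_pow_left₀ n (by linarith) (lt_of_le_of_lt hwle hk)
        have h7 : (w - z).re ≤ ‖z - w‖ := by
          rw [norm_sub_rev]
          calc (w - z).re ≤ |(w - z).re| := le_abs_self _
            _ ≤ ‖w - z‖ := Complex.abs_re_le_norm _
            _ = ‖w - z‖ := rfl
        have h8 : w.re = z.re + (w - z).re := by simp [Complex.sub_re]
        linarith
      have hvcl : IsClosed v := by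
        apply IsSeqClosed.isClosed
        intro x t hx hlim
        have htI : t ∈ Set.Icc (0:ℝ) 1 :=
          isClosed_Icc.mem_of_tendsto hlim (Filter.Eventually.of_forall fun k => (hx k).1)
        choose z hz1 hz2 using fun k => (hx k).2
        set S : ℝ := ∑ i, ∑ j, ‖A' i j‖ with hS
        set B : ℝ := ∑ i, |d i| with hB
        have hSnn : 0 ≤ S :=
          Finset.sum_nonneg fun i _ => Finset.sum_nonneg fun j _ => norm_nonneg _
        have hBnn : 0 ≤ B := Finset.sum_nonneg fun i _ => abs_nonneg _
        have hrow : ∀ s ∈ Set.Icc (0:ℝ) 1, ∀ i, ∑ j, ‖(M s) i j‖ ≤ (1 + B) * S := by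
          intro s hs i
          have h1 : ∀ j, ‖(M s) i j‖ = |er s i| * ‖A' i j‖ := fun j => by
            simp [hM, Matrix.diagonal_mul]
          have h2 : |er s i| ≤ 1 + B := by
            have habs : |er s i| ≤ |1 - s| + |s * d i| := abs_add_le _ _
            have e1 : |1 - s| ≤ 1 := by
              rw [abs_of_nonneg (by linarith [hs.2])]
              linarith [hs.1]
            have e2 : |s * d i| ≤ B := by
              rw [abs_mul, abs_of_nonneg hs.1]
              calc s * |d i| ≤ 1 * |d i| :=
                    mul_le_mul_of_nonneg_right hs.2 (abs_nonneg _)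
                _ = |d i| := one_mul _
                _ ≤ B := Finset.single_le_sum (fun j _ => abs_nonneg (d j)) (Finset.mem_univ i)
            linarith
          calc ∑ j, ‖(M s) i j‖ = |er s i| * ∑ j, ‖A' i j‖ := by
                rw [Finset.mul_sum]
                exact Finset.sum_congr rfl fun j _ => h1 j
            _ ≤ (1 + B) * S := by
                refine mul_le_mul h2 ?_ ?_ (by linarith)
                · exact Finset.single_le_sum
                    (f := fun i => ∑ j, ‖A' i j‖)
                    (fun i _ => Finset.sum_nonneg fun j _ => norm_nonneg _)
                    (Finset.mem_univ i)
                · exact Finset.sum_nonneg fun j _ => norm_nonneg _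
        have hbd : ∀ k, z k ∈ Metric.closedBall (0:ℂ) ((1 + B) * S) := fun k => by
          rw [Metric.mem_closedBall, dist_zero_right]
          exact Stmt9Aux.root_norm_bound hn (M (x k)) (z k) (hz1 k) (hrow (x k) (hx k).1)
        obtain ⟨μ, -, φ, hφ, hzφ⟩ := tendsto_subseq_of_bounded Metric.isBounded_closedBall hbd
        have hpair : Filter.Tendsto (fun k => (x (φ k), z (φ k))) Filter.atTop (nhds (t, μ)) :=
          (hlim.comp hφ.tendsto_atTop).prodMk_nhds hzφ
        have hdet0 : (μ • (1 : Matrix (Fin n) (Fin n) ℂ) - M t).det = 0 := by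
          have h2 : ((fun p : ℝ × ℂ => (p.2 • (1 : Matrix (Fin n) (Fin n) ℂ) - M p.1).det) ∘
              (fun k => (x (φ k), z (φ k)))) = fun _ => (0 : ℂ) := funext fun k => hz1 (φ k)
          have h1 := (hMcont.tendsto (t, μ)).comp hpair
          rw [h2] at h1
          exact tendsto_nhds_unique h1 tendsto_const_nhds
        have hre0 : μ.re ≤ 0 :=
          le_of_tendsto ((Complex.continuous_re.tendsto μ).comp hzφ)
            (Filter.Eventually.of_forall fun k => (hz2 (φ k)).le)
        exact ⟨htI, μ, hdet0, lt_of_le_of_ne hre0 (key_re_ne t htI μ hdet0)⟩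
      have hsub : Set.Icc (0:ℝ) 1 ⊆ u ∪ v := by
        intro t ht
        by_cases h : ∀ z : ℂ, (z • (1 : Matrix (Fin n) (Fin n) ℂ) - M t).det = 0 → 0 < z.re
        · exact Or.inl ⟨ht, h⟩
        · push_neg at h
          obtain ⟨z, hz, hle⟩ := h
          exact Or.inr ⟨ht, z, hz, lt_of_le_of_ne hle (key_re_ne t ht z hz)⟩
      have hdisj : Set.Icc (0:ℝ) 1 ∩ (u ∩ v) = ∅ := by
        ext t
        simp only [Set.mem_inter_iff, Set.mem_empty_iff_false, iff_false]
        rintro ⟨-, ⟨-, h1⟩, ⟨-, z, hz, h2⟩⟩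
        exact absurd (h1 z hz) (by linarith)
      rcases isPreconnected_iff_subset_of_disjoint_closed.mp isPreconnected_Icc u v hucl hvcl
        hsub hdisj with hcase | hcase
      · have h1 := (hcase (Set.right_mem_Icc.mpr zero_le_one)).2
        have hM1 : M 1 = (Matrix.diagonal d * A).map (fun x => (x : ℂ)) := by
          ext i j
          simp only [hM, her, hA', Matrix.diagonal_mul, Matrix.map_apply]
          push_cast
          ring
        intro μ hμ
        apply h1
        rw [hM1]
        exact (Stmt9Aux.mem_spectrum_iff_det _ μ).mp hμ
      · exfalso
        obtain ⟨-, z, hz, hneg⟩ := hcase (Set.left_mem_Icc.mpr zero_le_one)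
        have hM0 : M 0 = A' := by
          ext i j
          simp [hM, her, Matrix.diagonal_mul]
        rw [hM0] at hz
        have := hA z ((Stmt9Aux.mem_spectrum_iff_det A' z).mpr hz)
        linarith
end

section
/- Let n ≥ 2 and let A be a real n×n matrix that is positive stable. For d = (d₁,…,d_{n−1}) ∈ ℝ^{n−1} set z₀(d) = det(A|ₙ + i·diag(d₁,…,d_{n−1})) and z₁(d) = det(A + i·diag(d₁,…,d_{n−1},0)). If either (a) Re(conj(z₀(d))·z₁(d)) > 0 for every d with all dⱼ > 0, or (b) Im(conj(z₀(d))·z₁(d)) > 0 for every d with all dⱼ > 0, then A is D-stable. -/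
open Matrix

/-- `z₀(d) = det(A|ₙ + i·diag(d₁,…,d_{n−1}))`, where `A|ₙ` is obtained from `A` by
deleting the last row and column. -/
noncomputable def z0 (n : ℕ) (A : Matrix (Fin (n + 2)) (Fin (n + 2)) ℝ)
    (d : Fin (n + 1) → ℝ) : ℂ :=
  ((A.map (fun x => (x : ℂ))).submatrix Fin.castSucc Fin.castSucc +
      Complex.I • Matrix.diagonal (fun i : Fin (n + 1) => (d i : ℂ))).det

/-- `z₁(d) = det(A + i·diag(d₁,…,d_{n−1},0))`. -/
noncomputable def z1 (n : ℕ) (A : Matrix (Fin (n + 2)) (Fin (n + 2)) ℝ)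
    (d : Fin (n + 1) → ℝ) : ℂ :=
  (A.map (fun x => (x : ℂ)) +
      Complex.I •
        Matrix.diagonal (fun i : Fin (n + 2) => ((Fin.snoc d 0 : Fin (n + 2) → ℝ) i : ℂ))).det


lemma my_eval_charpoly {N : ℕ} (M : Matrix (Fin N) (Fin N) ℂ) (μ : ℂ) :
    M.charpoly.eval μ = (μ • (1 : Matrix (Fin N) (Fin N) ℂ) - M).det := by
  rw [Matrix.charpoly, ← Polynomial.coe_evalRingHom, RingHom.map_det]
  congr 1
  ext i j
  by_cases h : i = j <;>
    simp [Matrix.charmatrix_apply, Matrix.one_apply, h, Matrix.diagonal_apply]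


lemma eig_bound {N : ℕ} (M : Matrix (Fin N) (Fin N) ℂ) (μ : ℂ)
    (hdet : (μ • (1 : Matrix (Fin N) (Fin N) ℂ) - M).det = 0) :
    ‖μ‖ ≤ ∑ i, ∑ j, ‖M i j‖ := by
  obtain ⟨v, hv0, hv⟩ := (Matrix.exists_mulVec_eq_zero_iff).2 hdet
  have hN : 0 < N := by
    rcases Nat.eq_zero_or_pos N with h | h
    · exact absurd (_root_.funext fun i => absurd i.2 (by omega)) hv0
    · exact h
  haveI : Nonempty (Fin N) := ⟨⟨0, hN⟩⟩
  obtain ⟨i, -, hi⟩ := Finset.exists_max_image Finset.univ (fun j => ‖v j‖)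
    ⟨Classical.arbitrary _, Finset.mem_univ _⟩
  have hvi : 0 < ‖v i‖ := by
    rcases (norm_nonneg (v i)).eq_or_lt with h | h
    · refine absurd (_root_.funext (f := v) fun j => ?_) hv0
      have h2 := hi j (Finset.mem_univ j)
      rw [← h] at h2
      simpa using le_antisymm h2 (norm_nonneg _)
    · exact h
  have key : μ * v i = M.mulVec v i := by
    have h1 : (μ • (1 : Matrix (Fin N) (Fin N) ℂ)).mulVec v i - M.mulVec v i = 0 := by
      have := congrFun hv i
      rw [Matrix.sub_mulVec] at this
      simpa using this
    have h2 : (μ • (1 : Matrix (Fin N) (Fin N) ℂ)).mulVec v i = μ * v i := by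
      rw [Matrix.smul_mulVec, Matrix.one_mulVec]; rfl
    rw [h2] at h1; linear_combination h1
  have hrow : ‖μ‖ * ‖v i‖ ≤ (∑ j, ‖M i j‖) * ‖v i‖ := by
    calc ‖μ‖ * ‖v i‖ = ‖μ * v i‖ := (norm_mul _ _).symm
      _ = ‖∑ j, M i j * v j‖ := by rw [key]; rfl
      _ ≤ ∑ j, ‖M i j * v j‖ := norm_sum_le _ _
      _ ≤ ∑ j, ‖M i j‖ * ‖v i‖ := by
          refine Finset.sum_le_sum fun j _ => ?_
          rw [norm_mul]
          exact mul_le_mul_of_nonneg_left (hi j (Finset.mem_univ j)) (norm_nonneg _)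
      _ = (∑ j, ‖M i j‖) * ‖v i‖ := by rw [Finset.sum_mul]
  have h3 : ‖μ‖ ≤ ∑ j, ‖M i j‖ := le_of_mul_le_mul_right hrow hvi
  refine h3.trans ?_
  exact Finset.single_le_sum (fun k _ => Finset.sum_nonneg fun j _ => norm_nonneg _)
    (Finset.mem_univ i)

section RootNear
open Polynomial

lemma multiset_prod_ge {z : ℂ} {ε : ℝ} (hε : 0 ≤ ε) :
    ∀ (s : Multiset ℂ), (∀ r ∈ s, ε ≤ ‖z - r‖) →
      ε ^ Multiset.card s ≤ (s.map fun r => ‖z - r‖).prod := by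
  refine Multiset.induction ?_ ?_
  · simp
  · intro a s ih hs
    rw [Multiset.map_cons, Multiset.prod_cons, Multiset.card_cons, pow_succ, mul_comm]
    have h1 : ε ≤ ‖z - a‖ := hs a (Multiset.mem_cons_self a s)
    have h2 : ε ^ Multiset.card s ≤ (s.map fun r => ‖z - r‖).prod :=
      ih fun r hr => hs r (Multiset.mem_cons_of_mem hr)
    exact mul_le_mul h1 h2 (pow_nonneg hε _) (norm_nonneg _)

lemma norm_multiset_prod' : ∀ (s : Multiset ℂ), ‖s.prod‖ = (s.map norm).prod := by
  refine Multiset.induction (by simp) ?_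
  intro a s ih
  simp [ih]

/-- if a monic complex polynomial has small value at `z`, it has a root near `z`. -/
lemma root_near {p : ℂ[X]} (hm : p.Monic) {N : ℕ} (hdeg : p.natDegree = N)
    {z : ℂ} {ε : ℝ} (hε : 0 < ε) (hε1 : ε ≤ 1)
    (hsmall : ‖p.eval z‖ < ε ^ N) : ∃ r ∈ p.roots, ‖z - r‖ < ε := by
  by_contra hc
  push_neg at hc
  have hsplit : p = (p.roots.map fun a => X - C a).prod :=
    (IsAlgClosed.splits p).eq_prod_roots_of_monic hm
  have heval : ‖p.eval z‖ = ((p.roots.map fun r => ‖z - r‖)).prod := by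
    conv_lhs => rw [hsplit]
    rw [Polynomial.eval_multiset_prod, norm_multiset_prod']
    congr 1
    rw [Multiset.map_map, Multiset.map_map]
    congr 1
    ext r
    simp
  have hcard : Multiset.card p.roots ≤ N := hdeg ▸ p.card_roots'
  have h1 : ε ^ N ≤ ε ^ Multiset.card p.roots :=
    pow_le_pow_of_le_one hε.le hε1 hcard
  have h2 := multiset_prod_ge hε.le p.roots hc
  rw [heval] at hsmall
  linarith

end RootNear

lemma spec_iff_det {N : ℕ} (M : Matrix (Fin N) (Fin N) ℂ) (μ : ℂ) :
    μ ∈ spectrum ℂ M ↔ (μ • (1 : Matrix (Fin N) (Fin N) ℂ) - M).det = 0 := by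
  rw [spectrum.mem_iff, Algebra.algebraMap_eq_smul_one, Matrix.isUnit_iff_isUnit_det,
    isUnit_iff_ne_zero, not_not]

lemma conj_det_trick {N : ℕ} (A : Matrix (Fin N) (Fin N) ℝ) (e : Fin N → ℝ) :
    (starRingEnd ℂ) (A.map (fun x => (x : ℂ)) +
        Complex.I • Matrix.diagonal (fun i => ((e i : ℝ) : ℂ))).det
      = (A.map (fun x => (x : ℂ)) +
          Complex.I • Matrix.diagonal (fun i => ((-(e i) : ℝ) : ℂ))).det := by
  rw [RingHom.map_det]
  congr 1
  ext i j
  by_cases hij : i = j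
  · subst hij
    simp [Matrix.map_apply, Matrix.diagonal_apply, Complex.ext_iff]
  · simp [Matrix.map_apply, Matrix.diagonal_apply, hij, Complex.ext_iff]

lemma negvanish (n : ℕ) (A : Matrix (Fin (n + 2)) (Fin (n + 2)) ℝ)
    (hnv : ∀ e : Fin (n + 2) → ℝ, (∀ i, 0 < e i) →
      (A.map (fun x => (x : ℂ)) +
        Complex.I • Matrix.diagonal (fun i => ((e i : ℝ) : ℂ))).det ≠ 0)
    (e : Fin (n + 2) → ℝ) (he : ∀ i, e i < 0) :
    (A.map (fun x => (x : ℂ)) +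
        Complex.I • Matrix.diagonal (fun i => ((e i : ℝ) : ℂ))).det ≠ 0 := by
  intro hdet
  have h1 := conj_det_trick (N := n + 2) A e
  rw [hdet, map_zero] at h1
  exact hnv (fun i => -(e i)) (fun i => by simpa using neg_pos.mpr (he i)) h1.symm


lemma det_snoc (n : ℕ) (A : Matrix (Fin (n + 2)) (Fin (n + 2)) ℝ)
    (d : Fin (n + 1) → ℝ) (t : ℝ) :
    (A.map (fun x => (x : ℂ)) +
        Complex.I • Matrix.diagonal
          (fun i : Fin (n + 2) => ((Fin.snoc d t : Fin (n + 2) → ℝ) i : ℂ))).det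
      = z1 n A d + Complex.I * t * z0 n A d := by
  set Ac := A.map (fun x => (x : ℂ)) with hAc
  set B0 := Ac + Complex.I • Matrix.diagonal
      (fun i : Fin (n + 2) => ((Fin.snoc d (0:ℝ) : Fin (n + 2) → ℝ) i : ℂ)) with hB0
  set L : Fin (n + 2) := Fin.last (n + 1) with hL
  have hBt : (Ac + Complex.I • Matrix.diagonal
      (fun i : Fin (n + 2) => ((Fin.snoc d t : Fin (n + 2) → ℝ) i : ℂ)))
      = B0.updateRow L (B0 L + (Complex.I * (t:ℂ)) • (Pi.single L (1:ℂ) : Fin (n + 2) → ℂ)) := by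
    ext i j
    by_cases hiL : i = L
    · subst hiL
      rw [Matrix.updateRow_self]
      by_cases hjL : j = L
      · subst hjL
        simp only [hB0, Matrix.add_apply, Pi.add_apply, Pi.smul_apply, Pi.single_apply,
          Matrix.smul_apply, Matrix.diagonal_apply_eq, if_pos rfl, hL, Fin.snoc_last,
          smul_eq_mul]
        push_cast
        ring
      · simp [hB0, Matrix.diagonal_apply, Ne.symm hjL, Pi.single_apply, hjL]
    · rw [Matrix.updateRow_ne hiL]
      obtain ⟨i', rfl⟩ := Fin.exists_castSucc_eq.2 hiL
      by_cases hji : j = Fin.castSucc i'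
      · subst hji
        simp [hB0, Matrix.diagonal_apply, Fin.snoc_castSucc]
      · simp [hB0, Matrix.diagonal_apply, Ne.symm hji, hji]
  rw [hBt]
  rw [Matrix.det_updateRow_add, Matrix.updateRow_eq_self, Matrix.det_updateRow_smul]
  have hE : (B0.updateRow L (Pi.single L (1:ℂ) : Fin (n + 2) → ℂ)).det = z0 n A d := by
    rw [Matrix.det_succ_row _ L]
    rw [Finset.sum_eq_single L]
    · have h1 : (B0.updateRow L (Pi.single L (1:ℂ) : Fin (n + 2) → ℂ)) L L = 1 := by
        rw [Matrix.updateRow_self]; simp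
      rw [h1]
      have h2 : ((-1 : ℂ)) ^ ((L : ℕ) + (L : ℕ)) = 1 := by
        rw [← two_mul, pow_mul]; norm_num
      rw [h2, one_mul, one_mul]
      congr 1
      ext i j
      rw [Matrix.submatrix_apply]
      have hsA : L.succAbove = Fin.castSucc := Fin.succAbove_last
      rw [hsA]
      rw [Matrix.updateRow_ne (Fin.castSucc_lt_last i).ne]
      by_cases hij : i = j
      · subst hij
        simp [hB0, hAc, Matrix.diagonal_apply, Fin.snoc_castSucc, Matrix.map_apply]
      · have : Fin.castSucc i ≠ Fin.castSucc j := fun hc => hij (Fin.castSucc_inj.mp hc)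
        simp [hB0, hAc, Matrix.diagonal_apply, this, hij, Matrix.map_apply]
    · intro j _ hjL
      have : (B0.updateRow L (Pi.single L (1:ℂ) : Fin (n + 2) → ℂ)) L j = 0 := by
        rw [Matrix.updateRow_self, Pi.single_apply, if_neg hjL]
      rw [this]; ring
    · intro h; exact absurd (Finset.mem_univ L) h
  rw [hE]
  rfl

lemma nonvanish (n : ℕ) (A : Matrix (Fin (n + 2)) (Fin (n + 2)) ℝ)
    (h : (∀ d : Fin (n + 1) → ℝ, (∀ j, 0 < d j) →
            0 < ((starRingEnd ℂ) (z0 n A d) * z1 n A d).re) ∨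
         (∀ d : Fin (n + 1) → ℝ, (∀ j, 0 < d j) →
            0 < ((starRingEnd ℂ) (z0 n A d) * z1 n A d).im))
    (e : Fin (n + 2) → ℝ) (he : ∀ i, 0 < e i) :
    (A.map (fun x => (x : ℂ)) +
        Complex.I • Matrix.diagonal (fun i => ((e i : ℝ) : ℂ))).det ≠ 0 := by
  intro hdet
  have hse : (Fin.snoc (Fin.init e) (e (Fin.last (n + 1))) : Fin (n + 2) → ℝ) = e :=
    Fin.snoc_init_self e
  set d : Fin (n + 1) → ℝ := Fin.init e with hd
  set t : ℝ := e (Fin.last (n + 1)) with ht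
  have hdpos : ∀ j, 0 < d j := fun j => he _
  have htpos : 0 < t := he _
  have hkey : z1 n A d + Complex.I * t * z0 n A d = 0 := by
    rw [← det_snoc n A d t]
    rw [show (fun i : Fin (n + 2) => ((Fin.snoc d t : Fin (n + 2) → ℝ) i : ℂ))
        = fun i => ((e i : ℝ) : ℂ) by rw [hd, ht, hse]]
    exact hdet
  have hz1 : z1 n A d = -(Complex.I * t * z0 n A d) := by linear_combination hkey
  have hw : (starRingEnd ℂ) (z0 n A d) * z1 n A d
      = -(Complex.I * t) * Complex.normSq (z0 n A d) := by
    rw [hz1, Complex.normSq_eq_conj_mul_self]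
    ring
  rcases h with h | h
  · have h1 := h d hdpos
    rw [hw] at h1
    simp [Complex.ext_iff] at h1
  · have h1 := h d hdpos
    rw [hw] at h1
    have : ((-(Complex.I * (t:ℂ))) * (Complex.normSq (z0 n A d) : ℂ)).im
        = -(t * Complex.normSq (z0 n A d)) := by
      simp [Complex.ext_iff]
    rw [this] at h1
    nlinarith [Complex.normSq_nonneg (z0 n A d), htpos]

theorem stmt11' {n : ℕ} {A : Matrix (Fin (n + 2)) (Fin (n + 2)) ℝ} (hA : ∀ μ ∈ spectrum ℂ (A.map (fun x => (x : ℂ))), 0 < μ.re)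
    (hnv : ∀ e : Fin (n + 2) → ℝ, (∀ i, 0 < e i) →
      (A.map (fun x => (x : ℂ)) +
        Complex.I • Matrix.diagonal (fun i => ((e i : ℝ) : ℂ))).det ≠ 0)
    (hnv' : ∀ e : Fin (n + 2) → ℝ, (∀ i, e i < 0) →
      (A.map (fun x => (x : ℂ)) +
        Complex.I • Matrix.diagonal (fun i => ((e i : ℝ) : ℂ))).det ≠ 0)
    (d : Fin (n + 2) → ℝ) (hd : ∀ i, 0 < d i) (μ : ℂ)
    (hμ : μ ∈ spectrum ℂ ((Matrix.diagonal d * A).map (fun x => (x : ℂ)))) :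
    0 < μ.re := by
  by_contra hre
  push_neg at hre
  set Ac := A.map (fun x : ℝ => (x : ℂ)) with hAc
  set ds : ℝ → Fin (n + 2) → ℝ := fun s i => 1 - s + s * d i with hds
  set Mc : ℝ → Matrix (Fin (n + 2)) (Fin (n + 2)) ℂ :=
    fun s => Matrix.diagonal (fun i => ((ds s i : ℝ) : ℂ)) * Ac with hMc
  have hdspos : ∀ s ∈ Set.Icc (0 : ℝ) 1, ∀ i, 0 < ds s i := by
    rintro s ⟨h0, h1⟩ i
    have h2 := hd i
    have h3 : 0 ≤ s * d i := mul_nonneg h0 h2.le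
    simp only [hds]
    rcases h1.eq_or_lt with h | h
    · subst h; nlinarith
    · nlinarith
  have hMcentry : ∀ s i j, Mc s i j = ((ds s i : ℝ) : ℂ) * Ac i j := by
    intro s i j
    simp [hMc, Matrix.diagonal_mul]
  have hMccont : ∀ i j, Continuous fun s => Mc s i j := by
    intro i j
    simp only [hMcentry]
    exact ((Complex.continuous_ofReal.comp (by continuity)).mul continuous_const)
  -- the entrywise-sum bound function
  set C : ℝ → ℝ := fun s => ∑ i, ∑ j, ‖Mc s i j‖ with hC
  have hCcont : Continuous C := by
    apply continuous_finset_sum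
    intro i _
    apply continuous_finset_sum
    intro j _
    exact (hMccont i j).norm
  obtain ⟨s₀, hs₀, hmax⟩ := isCompact_Icc.exists_isMaxOn (Set.nonempty_Icc.mpr zero_le_one)
    hCcont.continuousOn
  set B := C s₀ with hB
  have hBbound : ∀ s ∈ Set.Icc (0 : ℝ) 1, C s ≤ B := fun s hs => hmax hs
  -- the bad set
  set S : Set ℝ := {s | s ∈ Set.Icc (0 : ℝ) 1 ∧
    ∃ z : ℂ, z.re ≤ 0 ∧ (z • (1 : Matrix (Fin (n + 2)) (Fin (n + 2)) ℂ) - Mc s).det = 0}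
    with hS
  have hMc1 : Mc 1 = (Matrix.diagonal d * A).map (fun x => (x : ℂ)) := by
    have h1 : (Matrix.diagonal d * A).map (fun x : ℝ => (x : ℂ))
        = (Matrix.diagonal d * A).map Complex.ofRealHom := rfl
    rw [h1, Matrix.map_mul]
    have h2 : (Matrix.diagonal d).map Complex.ofRealHom
        = Matrix.diagonal (fun i => ((ds 1 i : ℝ) : ℂ)) := by
      rw [Matrix.diagonal_map (by simp)]
      congr 1
      funext i
      simp [hds]
    rw [h2]
    rfl
  have h1S : (1 : ℝ) ∈ S := by
    refine ⟨by norm_num, μ, hre, ?_⟩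
    rw [hMc1]
    exact (spec_iff_det _ μ).mp hμ
  have h0S : (0 : ℝ) ∉ S := by
    rintro ⟨-, z, hz, hdet⟩
    have hMc0 : Mc 0 = Ac := by
      have : (fun i : Fin (n + 2) => ((ds 0 i : ℝ) : ℂ)) = fun _ => (1 : ℂ) := by
        funext i; simp [hds]
      rw [hMc]
      simp only [this]
      rw [Matrix.diagonal_one, one_mul]
    rw [hMc0] at hdet
    have := hA z ((spec_iff_det _ z).mpr hdet)
    linarith
  -- compactness of S
  set K : Set (ℝ × ℂ) := (Set.Icc (0 : ℝ) 1 ×ˢ Metric.closedBall (0 : ℂ) B) ∩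
    {p : ℝ × ℂ | p.2.re ≤ 0 ∧
      (p.2 • (1 : Matrix (Fin (n + 2)) (Fin (n + 2)) ℂ) - Mc p.1).det = 0} with hK
  have hdetcont : Continuous fun p : ℝ × ℂ =>
      (p.2 • (1 : Matrix (Fin (n + 2)) (Fin (n + 2)) ℂ) - Mc p.1).det := by
    apply Continuous.matrix_det
    apply continuous_matrix
    intro i j
    have : (fun p : ℝ × ℂ =>
        (p.2 • (1 : Matrix (Fin (n + 2)) (Fin (n + 2)) ℂ) - Mc p.1) i j)
        = fun p : ℝ × ℂ => p.2 * (1 : Matrix (Fin (n + 2)) (Fin (n + 2)) ℂ) i j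
            - Mc p.1 i j := by
      funext p
      simp [Matrix.sub_apply, Matrix.smul_apply, smul_eq_mul]
    rw [this]
    exact (continuous_snd.mul continuous_const).sub ((hMccont i j).comp continuous_fst)
  have hKcomp : IsCompact K := by
    apply IsCompact.inter_right (isCompact_Icc.prod (isCompact_closedBall 0 B))
    apply IsClosed.inter
    · exact isClosed_le (Complex.continuous_re.comp continuous_snd) continuous_const
    · exact isClosed_eq hdetcont continuous_const
  have hSK : S = Prod.fst '' K := by
    ext s
    constructor
    · rintro ⟨hs, z, hz, hdet⟩
      refine ⟨(s, z), ⟨⟨hs, ?_⟩, hz, hdet⟩, rfl⟩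
      rw [Metric.mem_closedBall, dist_zero_right]
      calc ‖z‖ ≤ ∑ i, ∑ j, ‖Mc s i j‖ := eig_bound (Mc s) z hdet
        _ ≤ B := hBbound s hs
    · rintro ⟨⟨s', z⟩, ⟨⟨hs, -⟩, hz, hdet⟩, rfl⟩
      exact ⟨hs, z, hz, hdet⟩
  have hScomp : IsCompact S := hSK ▸ hKcomp.image continuous_fst
  have hSne : S.Nonempty := ⟨1, h1S⟩
  set sstar := sInf S with hsstar
  have hsS : sstar ∈ S := hScomp.sInf_mem hSne
  have hsIcc : sstar ∈ Set.Icc (0 : ℝ) 1 := hsS.1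
  have hspos : 0 < sstar := by
    rcases hsIcc.1.eq_or_lt with h | h
    · exact absurd (h ▸ hsS) h0S
    · exact h
  obtain ⟨-, z, hzre, hzdet⟩ := hsS
  rcases hzre.lt_or_eq with hzlt | hzeq
  · -- strict: contradiction with infimum using root_near
    set ε := min 1 (-z.re) with hε
    have hεpos : 0 < ε := lt_min one_pos (by linarith)
    have hε1 : ε ≤ 1 := min_le_left _ _
    have hεle : ε ≤ -z.re := min_le_right _ _
    set g : ℝ → ℂ := fun s =>
      (z • (1 : Matrix (Fin (n + 2)) (Fin (n + 2)) ℂ) - Mc s).det with hg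
    have hgcont : Continuous g := by
      apply Continuous.matrix_det
      apply continuous_matrix
      intro i j
      have : (fun s => (z • (1 : Matrix (Fin (n + 2)) (Fin (n + 2)) ℂ) - Mc s) i j)
          = fun s => z * (1 : Matrix (Fin (n + 2)) (Fin (n + 2)) ℂ) i j - Mc s i j := by
        funext s
        simp [Matrix.sub_apply, Matrix.smul_apply, smul_eq_mul]
      rw [this]
      exact continuous_const.sub (hMccont i j)
    have htd : Filter.Tendsto g (nhds sstar) (nhds 0) := by
      have := hgcont.tendsto sstar
      rwa [show g sstar = 0 from hzdet] at this
    have hev := Metric.tendsto_nhds.mp htd (ε ^ (n + 2)) (pow_pos hεpos _)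
    obtain ⟨δ, hδpos, hδ⟩ := Metric.eventually_nhds_iff.mp hev
    set s := max (sstar / 2) (sstar - δ / 2) with hsdef
    have hslt : s < sstar := max_lt (by linarith) (by linarith)
    have hs0 : 0 ≤ s := le_trans (by linarith) (le_max_left _ _)
    have hsle1 : s ≤ 1 := le_trans hslt.le hsIcc.2
    have hsdist : dist s sstar < δ := by
      rw [Real.dist_eq, abs_lt]
      constructor
      · have : sstar - δ / 2 ≤ s := le_max_right _ _
        linarith
      · linarith
    have hsmall : ‖(Mc s).charpoly.eval z‖ < ε ^ (n + 2) := by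
      rw [my_eval_charpoly]
      have := hδ hsdist
      rwa [dist_zero_right] at this
    obtain ⟨r, hr, hrnear⟩ := root_near (Matrix.charpoly_monic _)
      (by rw [Matrix.charpoly_natDegree_eq_dim, Fintype.card_fin]) hεpos hε1 hsmall
    have hrre : r.re ≤ 0 := by
      have h1 : r.re - z.re ≤ ‖z - r‖ := by
        calc r.re - z.re = (r - z).re := by simp
          _ ≤ ‖r - z‖ := Complex.re_le_norm _
          _ = ‖z - r‖ := by rw [norm_sub_rev]
      linarith
    have hrdet : (r • (1 : Matrix (Fin (n + 2)) (Fin (n + 2)) ℂ) - Mc s).det = 0 := by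
      rw [← my_eval_charpoly]
      exact (Polynomial.isRoot_of_mem_roots hr)
    have hsinS : s ∈ S := ⟨⟨hs0, hsle1⟩, r, hrre, hrdet⟩
    have : sstar ≤ s := csInf_le ⟨0, fun x hx => hx.1.1⟩ hsinS
    linarith
  · -- on the imaginary axis
    set t := z.im with htdef
    have hz : z = Complex.I * t := by
      apply Complex.ext
      · simpa using hzeq
      · simp [htdef]
    set e : Fin (n + 2) → ℝ := fun i => -t / ds sstar i with he
    have hdsne : ∀ i, ds sstar i ≠ 0 := fun i => (hdspos sstar hsIcc i).ne'
    set X := Ac + Complex.I • Matrix.diagonal (fun i => ((e i : ℝ) : ℂ)) with hX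
    have hfact : z • (1 : Matrix (Fin (n + 2)) (Fin (n + 2)) ℂ) - Mc sstar
        = (-(Matrix.diagonal fun i => ((ds sstar i : ℝ) : ℂ))) * X := by
      ext i j
      rw [Matrix.neg_mul, Matrix.neg_apply, Matrix.diagonal_mul]
      by_cases hij : i = j
      · subst hij
        simp only [Matrix.sub_apply, Matrix.smul_apply, Matrix.one_apply_eq, smul_eq_mul,
          mul_one, hX, Matrix.add_apply, Matrix.diagonal_apply_eq, hMcentry, hz]
        have : ((ds sstar i : ℝ) : ℂ) * ((e i : ℝ) : ℂ) = ((-t : ℝ) : ℂ) := by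
          rw [← Complex.ofReal_mul]
          congr 1
          simp only [he]
          rw [mul_div_assoc']
          rw [mul_comm]
          rw [mul_div_assoc, div_self (hdsne i), mul_one]
        push_cast [he] at this ⊢
        rw [mul_add]
        rw [show ((ds sstar i : ℝ) : ℂ) * (Complex.I * (-(t : ℂ) / ((ds sstar i : ℝ) : ℂ)))
          = Complex.I * (((ds sstar i : ℝ) : ℂ) * (-(t : ℂ) / ((ds sstar i : ℝ) : ℂ))) by ring]
        rw [mul_div_cancel₀ _ (by exact_mod_cast hdsne i)]
        ring
      · simp only [Matrix.sub_apply, Matrix.smul_apply, Matrix.one_apply_ne hij, smul_eq_mul,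
          mul_zero, hX, Matrix.add_apply, Matrix.diagonal_apply_ne _ hij, hMcentry]
        ring
    have hdetD : (Matrix.diagonal fun i : Fin (n + 2) => ((ds sstar i : ℝ) : ℂ)).det ≠ 0 := by
      rw [Matrix.det_diagonal]
      exact Finset.prod_ne_zero_iff.mpr fun i _ => by exact_mod_cast hdsne i
    have hXdet : X.det = 0 := by
      have h1 : ((-(Matrix.diagonal fun i : Fin (n + 2) => ((ds sstar i : ℝ) : ℂ))) * X).det
          = 0 := hfact ▸ hzdet
      rw [Matrix.det_mul, Matrix.det_neg, mul_eq_zero, mul_eq_zero] at h1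
      rcases h1 with (h | h) | h
      · exact absurd h (by simp [pow_ne_zero])
      · exact absurd h hdetD
      · exact h
    rcases lt_trichotomy t 0 with ht | ht | ht
    · exact hnv e (fun i => div_pos (by linarith) (hdspos sstar hsIcc i)) hXdet
    · -- t = 0 : det Ac = 0 contradicts stability
      have he0 : e = fun _ => (0 : ℝ) := by funext i; simp [he, ht]
      have hX0 : X = Ac := by
        rw [hX, he0]
        simp
      have : (0 : ℂ) ∈ spectrum ℂ Ac := by
        rw [spec_iff_det]
        rw [zero_smul, zero_sub, Matrix.det_neg]
        rw [hX0] at hXdet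
        simp [hXdet]
      have := hA 0 this
      simp at this
    · refine hnv' e (fun i => div_neg_of_neg_of_pos (by linarith) (hdspos sstar hsIcc i)) hXdet


theorem stmt11 (n : ℕ) (A : Matrix (Fin (n + 2)) (Fin (n + 2)) ℝ) (hA : IsPosStable A)
    (h : (∀ d : Fin (n + 1) → ℝ, (∀ j, 0 < d j) →
            0 < ((starRingEnd ℂ) (z0 n A d) * z1 n A d).re) ∨
         (∀ d : Fin (n + 1) → ℝ, (∀ j, 0 < d j) →
            0 < ((starRingEnd ℂ) (z0 n A d) * z1 n A d).im)) :
    IsDStable A := by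
  intro d hd μ hμ
  exact stmt11' hA (nonvanish n A h)
    (negvanish n A (nonvanish n A h)) d hd μ hμ
end

section
/- Let P₀₀, Q₀₀, P₁₀, Q₁₀, P₀₁, Q₀₁, P₁₁, Q₁₁ be real numbers with P₀₀ ≠ 0. Then there exists d > 0 such that d·P₀₀ + Q₁₀ = 0, −d·Q₀₁ + P₁₁ = 0, and (−d·Q₀₀ + P₁₀)·(d·P₀₁ + Q₁₁) < 0, if and only if the following three conditions hold: P₀₀·P₁₁ + Q₁₀·Q₀₁ = 0; P₁₁·Q₀₁ − P₀₀·Q₁₀ > 0; and (P₁₀·P₀₀ + Q₁₀·Q₀₀)·(P₀₀·Q₁₁ − Q₁₀·P₀₁) < 0. Moreover, in that case the solution d is unique and is given by d = (P₁₁·Q₀₁ − P₀₀·Q₁₀)/(P₀₀² + Q₀₁²). -/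
/-!
Since `P₀₀ ≠ 0`, the first equation pins down `d = -Q₁₀ / P₀₀`. Substituting `Q₁₀ = -d P₀₀`, the
second equation and the sign condition become the stated ones after multiplying by `P₀₀` and by
`P₀₀² > 0` respectively, while the two equations together give
`d (P₀₀² + Q₀₁²) = P₁₁ Q₀₁ - P₀₀ Q₁₀`, which yields both the sign of `d` and its formula.
-/

section DeleteZeroStep

variable {P₀₀ Q₀₀ P₁₀ Q₁₀ P₀₁ Q₀₁ P₁₁ Q₁₁ d : ℝ}

lemma mul_sq_add_sq_eq_of_linear (h₁ : d * P₀₀ + Q₁₀ = 0) (h₂ : -d * Q₀₁ + P₁₁ = 0) :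
    d * (P₀₀ ^ 2 + Q₀₁ ^ 2) = P₁₁ * Q₀₁ - P₀₀ * Q₁₀ := by
  linear_combination P₀₀ * h₁ - Q₀₁ * h₂

lemma mul_add_mul_eq_of_linear (h₁ : d * P₀₀ + Q₁₀ = 0) :
    P₀₀ * P₁₁ + Q₁₀ * Q₀₁ = P₀₀ * (-d * Q₀₁ + P₁₁) := by
  linear_combination Q₀₁ * h₁

lemma product_eq_sq_mul_of_linear (h₁ : d * P₀₀ + Q₁₀ = 0) :
    (P₁₀ * P₀₀ + Q₁₀ * Q₀₀) * (P₀₀ * Q₁₁ - Q₁₀ * P₀₁) =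
      P₀₀ ^ 2 * ((-d * Q₀₀ + P₁₀) * (d * P₀₁ + Q₁₁)) := by
  obtain rfl : Q₁₀ = -d * P₀₀ := by linear_combination h₁
  ring

lemma system_iff_of_linear (h : P₀₀ ≠ 0) (h₁ : d * P₀₀ + Q₁₀ = 0) :
    (0 < d ∧ -d * Q₀₁ + P₁₁ = 0 ∧ (-d * Q₀₀ + P₁₀) * (d * P₀₁ + Q₁₁) < 0) ↔
      (P₀₀ * P₁₁ + Q₁₀ * Q₀₁ = 0 ∧
        0 < P₁₁ * Q₀₁ - P₀₀ * Q₁₀ ∧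
        (P₁₀ * P₀₀ + Q₁₀ * Q₀₀) * (P₀₀ * Q₁₁ - Q₁₀ * P₀₁) < 0) := by
  have hsq : 0 < P₀₀ ^ 2 := by positivity
  have hsum : 0 < P₀₀ ^ 2 + Q₀₁ ^ 2 := by positivity
  have h₂_iff : -d * Q₀₁ + P₁₁ = 0 ↔ P₀₀ * P₁₁ + Q₁₀ * Q₀₁ = 0 := by
    rw [mul_add_mul_eq_of_linear h₁, mul_eq_zero, or_iff_right h]
  have h₃_iff : (-d * Q₀₀ + P₁₀) * (d * P₀₁ + Q₁₁) < 0 ↔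
      (P₁₀ * P₀₀ + Q₁₀ * Q₀₀) * (P₀₀ * Q₁₁ - Q₁₀ * P₀₁) < 0 := by
    rw [product_eq_sq_mul_of_linear h₁]
    exact ⟨mul_neg_of_pos_of_neg hsq, fun h' => neg_of_mul_neg_right h' hsq.le⟩
  constructor
  · rintro ⟨hd, h₂, h₃⟩
    refine ⟨h₂_iff.1 h₂, ?_, h₃_iff.1 h₃⟩
    rw [← mul_sq_add_sq_eq_of_linear h₁ h₂]
    positivity
  · rintro ⟨h₂, hS, h₃⟩
    rw [← h₂_iff] at h₂
    rw [← mul_sq_add_sq_eq_of_linear h₁ h₂, mul_pos_iff_of_pos_right hsum] at hS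
    exact ⟨hS, h₂, h₃_iff.2 h₃⟩

end DeleteZeroStep

theorem stmt12 (P₀₀ Q₀₀ P₁₀ Q₁₀ P₀₁ Q₀₁ P₁₁ Q₁₁ : ℝ) (h : P₀₀ ≠ 0) :
    ((∃ d : ℝ, 0 < d ∧ d * P₀₀ + Q₁₀ = 0 ∧ -d * Q₀₁ + P₁₁ = 0 ∧
        (-d * Q₀₀ + P₁₀) * (d * P₀₁ + Q₁₁) < 0) ↔
      (P₀₀ * P₁₁ + Q₁₀ * Q₀₁ = 0 ∧
        0 < P₁₁ * Q₀₁ - P₀₀ * Q₁₀ ∧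
        (P₁₀ * P₀₀ + Q₁₀ * Q₀₀) * (P₀₀ * Q₁₁ - Q₁₀ * P₀₁) < 0)) ∧
    (∀ d : ℝ, 0 < d → d * P₀₀ + Q₁₀ = 0 → -d * Q₀₁ + P₁₁ = 0 →
        (-d * Q₀₀ + P₁₀) * (d * P₀₁ + Q₁₁) < 0 →
        d = (P₁₁ * Q₀₁ - P₀₀ * Q₁₀) / (P₀₀ ^ 2 + Q₀₁ ^ 2)) := by
  refine ⟨⟨?_, fun hc => ?_⟩, fun d _ h₁ h₂ _ => ?_⟩
  · rintro ⟨d, hd, h₁, h₂, h₃⟩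
    exact (system_iff_of_linear h h₁).1 ⟨hd, h₂, h₃⟩
  · have h₁ : -Q₁₀ / P₀₀ * P₀₀ + Q₁₀ = 0 := by rw [div_mul_cancel₀ _ h, neg_add_cancel]
    obtain ⟨hd, h₂, h₃⟩ := (system_iff_of_linear h h₁).2 hc
    exact ⟨-Q₁₀ / P₀₀, hd, h₁, h₂, h₃⟩
  · have hsum : P₀₀ ^ 2 + Q₀₁ ^ 2 ≠ 0 := by positivity
    exact eq_div_of_mul_eq hsum (mul_sq_add_sq_eq_of_linear h₁ h₂)
end

section
/- If a real n×n matrix A is D-stable, then A is invertible and its inverse A⁻¹ is D-stable. -/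
open Matrix

lemma map_eq_ofRealHom {m : ℕ} (M : Matrix (Fin m) (Fin m) ℝ) :
    M.map (fun x => (x : ℂ)) = M.map Complex.ofRealHom := rfl

lemma det_map_coe {m : ℕ} (M : Matrix (Fin m) (Fin m) ℝ) :
    (M.map (fun x => (x : ℂ))).det = (M.det : ℂ) := by
  rw [map_eq_ofRealHom, ← RingHom.mapMatrix_apply, ← RingHom.map_det]
  rfl

theorem stmt17 (n : ℕ) (A : Matrix (Fin n) (Fin n) ℝ) (hA : IsDStable A) :
    A.det ≠ 0 ∧ IsDStable A⁻¹ := by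
  set M : Matrix (Fin n) (Fin n) ℂ := A.map (fun x => (x : ℂ)) with hMdef
  have h1 : Matrix.diagonal (fun _ : Fin n => (1 : ℝ)) = 1 := Matrix.diagonal_one
  have hstable : IsPosStable A := by
    have := hA (fun _ => 1) (fun i => one_pos)
    rwa [h1, one_mul] at this
  have hdet : A.det ≠ 0 := by
    intro h
    have hMdet : M.det = 0 := by rw [hMdef, det_map_coe, h, Complex.ofReal_zero]
    have h0 : (0 : ℂ) ∈ spectrum ℂ M := by
      rw [spectrum.zero_mem_iff]
      intro hu
      exact ((Matrix.isUnit_iff_isUnit_det M).mp hu).ne_zero hMdet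
    simpa using hstable 0 h0
  refine ⟨hdet, ?_⟩
  have hMdet : IsUnit M.det := by
    rw [hMdef, det_map_coe]
    exact isUnit_iff_ne_zero.mpr (by exact_mod_cast hdet)
  have hMinv : M⁻¹ = (A⁻¹).map (fun x => (x : ℂ)) := by
    apply Matrix.inv_eq_left_inv
    rw [hMdef, map_eq_ofRealHom, map_eq_ofRealHom, ← Matrix.map_mul,
      Matrix.nonsing_inv_mul A (isUnit_iff_ne_zero.mpr hdet)]
    simp
  intro d hd μ hμ
  have hd0 : ∀ i, (d i : ℂ) ≠ 0 := fun i => by exact_mod_cast (hd i).ne'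
  set u : (Matrix (Fin n) (Fin n) ℂ)ˣ :=
    { val := Matrix.diagonal (fun i => (d i : ℂ))
      inv := Matrix.diagonal (fun i => ((d i : ℂ))⁻¹)
      val_inv := by
        rw [Matrix.diagonal_mul_diagonal]
        simp [mul_inv_cancel₀, hd0]
      inv_val := by
        rw [Matrix.diagonal_mul_diagonal]
        simp [inv_mul_cancel₀, hd0] } with hu
  set uM : (Matrix (Fin n) (Fin n) ℂ)ˣ := Matrix.nonsingInvUnit M hMdet with huM
  have huMval : (uM : Matrix (Fin n) (Fin n) ℂ) = M := rfl
  have huMinv : ((uM⁻¹ : _ˣ) : Matrix (Fin n) (Fin n) ℂ) = M⁻¹ := rfl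
  have hDmap : (Matrix.diagonal d).map (fun x : ℝ => (x : ℂ))
      = Matrix.diagonal (fun i => (d i : ℂ)) := by
    rw [Matrix.diagonal_map (by simp)]
  have hmat : (Matrix.diagonal d * A⁻¹).map (fun x => (x : ℂ))
      = ((u * uM⁻¹ : _ˣ) : Matrix (Fin n) (Fin n) ℂ) := by
    rw [map_eq_ofRealHom, Matrix.map_mul, Units.val_mul, huMinv, hMinv]
    exact congrArg (fun X => X * (A⁻¹.map (fun x : ℝ => (x : ℂ)))) hDmap
  rw [hmat] at hμ
  have hμ0 : μ ≠ 0 := by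
    intro h
    rw [h, spectrum.zero_mem_iff] at hμ
    exact hμ (u * uM⁻¹).isUnit
  have hinv : μ⁻¹ ∈ spectrum ℂ (((u * uM⁻¹)⁻¹ : _ˣ) : Matrix (Fin n) (Fin n) ℂ) := by
    have := (spectrum.inv_mem_iff (r := Units.mk0 μ hμ0) (a := u * uM⁻¹)).mp hμ
    simpa using this
  have hval : (((u * uM⁻¹)⁻¹ : _ˣ) : Matrix (Fin n) (Fin n) ℂ)
      = M * Matrix.diagonal (fun i => ((d i : ℂ))⁻¹) := by
    rw [_root_.mul_inv_rev, inv_inv, Units.val_mul, huMval]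
    rfl
  rw [hval] at hinv
  have hconjmat : (u : Matrix (Fin n) (Fin n) ℂ)
        * (Matrix.diagonal (fun i => ((d i : ℂ))⁻¹) * M)
        * ((u⁻¹ : _ˣ) : Matrix (Fin n) (Fin n) ℂ)
      = M * Matrix.diagonal (fun i => ((d i : ℂ))⁻¹) := by
    show Matrix.diagonal (fun i => (d i : ℂ))
        * (Matrix.diagonal (fun i => ((d i : ℂ))⁻¹) * M)
        * Matrix.diagonal (fun i => ((d i : ℂ))⁻¹) = _
    rw [← mul_assoc, Matrix.diagonal_mul_diagonal]
    simp [mul_inv_cancel₀, hd0]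
  have hconj : spectrum ℂ (M * Matrix.diagonal (fun i => ((d i : ℂ))⁻¹))
      = spectrum ℂ (Matrix.diagonal (fun i => ((d i : ℂ))⁻¹) * M) := by
    rw [← hconjmat]
    exact spectrum.units_conjugate
  rw [hconj] at hinv
  have hre : 0 < (μ⁻¹).re := by
    have key := hA (fun i => (d i)⁻¹) (fun i => inv_pos.mpr (hd i))
    have hmat2 : (Matrix.diagonal (fun i => (d i)⁻¹) * A).map (fun x => (x : ℂ))
        = Matrix.diagonal (fun i => ((d i : ℂ))⁻¹) * M := by
      rw [map_eq_ofRealHom, Matrix.map_mul, Matrix.diagonal_map (by simp), hMdef,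
        map_eq_ofRealHom]
      congr 1
      funext i
      simp
    exact key μ⁻¹ (by rw [hmat2]; exact hinv)
  have hre2 : μ.re = (μ⁻¹).re / Complex.normSq μ⁻¹ := by
    rw [← Complex.inv_re, inv_inv]
  rw [hre2]
  exact div_pos hre (Complex.normSq_pos.mpr (inv_ne_zero hμ0))
end

section
/- If a real n×n matrix A is D-stable, then A is a P₀⁺-matrix; that is, every principal minor of A is nonnegative, and for each k with 1 ≤ k ≤ n the sum of all k×k principal minors of A is strictly positive. -/
open Matrix

/-- The principal minor of a square matrix on the rows and columns indexed by the
finite set `γ` (equal to `1` when `γ = ∅`). -/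
def pminor {m : ℕ} {R : Type*} [CommRing R] (M : Matrix (Fin m) (Fin m) R)
    (γ : Finset (Fin m)) : R :=
  (M.submatrix (fun i : {x // x ∈ γ} => (i : Fin m)) (fun j : {x // x ∈ γ} => (j : Fin m))).det

lemma det_piecewise {n : ℕ} {R : Type*} [CommRing R] (A : Matrix (Fin n) (Fin n) R)
    (γ : Finset (Fin n)) :
    (Matrix.of (fun i => if i ∈ γ then A i else (1 : Matrix (Fin n) (Fin n) R) i)).det
      = pminor A γ := by
  classical
  set M : Matrix (Fin n) (Fin n) R :=
    Matrix.of (fun i => if i ∈ γ then A i else (1 : Matrix (Fin n) (Fin n) R) i) with hM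
  let e : {x // x ∈ γ} ⊕ {x // x ∉ γ} ≃ Fin n := Equiv.sumCompl (· ∈ γ)
  have h1 : M.det = (M.submatrix e e).det := (Matrix.det_submatrix_equiv_self e M).symm
  have h2 : M.submatrix e e = Matrix.fromBlocks
      (A.submatrix (fun i : {x // x ∈ γ} => (i : Fin n)) (fun j : {x // x ∈ γ} => (j : Fin n)))
      (A.submatrix (fun i : {x // x ∈ γ} => (i : Fin n)) (fun j : {x // x ∉ γ} => (j : Fin n)))
      0 1 := by
    ext i j
    cases i with
    | inl i =>
      cases j with
      | inl j => simp [M, e, i.2]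
      | inr j => simp [M, e, i.2]
    | inr i =>
      cases j with
      | inl j =>
        have : (i : Fin n) ≠ (j : Fin n) := by
          intro h; exact i.2 (h ▸ j.2)
        simp [M, e, i.2, Matrix.one_apply, this]
      | inr j =>
        by_cases h : (i : Fin n) = (j : Fin n)
        · simp [M, e, i.2, Matrix.one_apply, h, Subtype.ext h, j.2]
        · simp [M, e, i.2, Matrix.one_apply, h,
            show ¬ i = j from fun hh => h (congrArg _ hh)]
  rw [h1, h2, Matrix.det_fromBlocks_zero₂₁]
  simp [pminor]

lemma det_add_diagonal {n : ℕ} {R : Type*} [CommRing R] (A : Matrix (Fin n) (Fin n) R)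
    (d : Fin n → R) :
    (A + Matrix.diagonal d).det
      = ∑ γ : Finset (Fin n), (∏ i ∈ γᶜ, d i) * pminor A γ := by
  classical
  have hrow : (A + Matrix.diagonal d) = Matrix.of
      ((fun i => A i) + (fun i => d i • (1 : Matrix (Fin n) (Fin n) R) i)) := by
    ext i j
    by_cases h : i = j <;> simp [Matrix.diagonal, Matrix.one_apply, h]
  set f := (Matrix.detRowAlternating : (Fin n → R) [⋀^Fin n]→ₗ[R] R).toMultilinearMap with hf
  have hdet : (A + Matrix.diagonal d).det
      = f ((fun i => A i) + (fun i => d i • (1 : Matrix (Fin n) (Fin n) R) i)) := by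
    rw [hrow]; rfl
  rw [hdet, f.map_add_univ]
  refine Finset.sum_congr rfl fun s _ => ?_
  have key : s.piecewise (fun i => A i) (fun i => d i • (1 : Matrix (Fin n) (Fin n) R) i)
      = sᶜ.piecewise (fun i => d i • (s.piecewise (fun i => A i)
          (fun i => (1 : Matrix (Fin n) (Fin n) R) i)) i)
        (s.piecewise (fun i => A i) (fun i => (1 : Matrix (Fin n) (Fin n) R) i)) := by
    funext i
    by_cases h : i ∈ s <;>
      simp [Finset.piecewise, h]
  rw [key, f.map_piecewise_smul]
  have hbase : f (s.piecewise (fun i => A i) (fun i => (1 : Matrix (Fin n) (Fin n) R) i))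
      = pminor A s := by
    have := det_piecewise A s
    rw [← this]
    congr 1
  rw [hbase, smul_eq_mul]

open Polynomial in
noncomputable def polyP {n : ℕ} {R : Type*} [CommRing R] (M : Matrix (Fin n) (Fin n) R) : R[X] :=
  ∑ γ : Finset (Fin n), Polynomial.C (pminor M γ) * Polynomial.X ^ (n - γ.card)

lemma pminor_empty {n : ℕ} {R : Type*} [CommRing R] (M : Matrix (Fin n) (Fin n) R) :
    pminor M (∅ : Finset (Fin n)) = 1 := by
  have : IsEmpty {x : Fin n // x ∈ (∅ : Finset (Fin n))} := by
    constructor; rintro ⟨x, hx⟩; exact absurd hx (Finset.notMem_empty x)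
  exact Matrix.det_isEmpty

open Polynomial in
lemma eval_polyP {n : ℕ} {R : Type*} [CommRing R] (M : Matrix (Fin n) (Fin n) R) (t : R) :
    (polyP M).eval t = (M + Matrix.diagonal (fun _ : Fin n => t)).det := by
  rw [det_add_diagonal, polyP, Polynomial.eval_finset_sum]
  refine Finset.sum_congr rfl fun γ _ => ?_
  rw [Polynomial.eval_mul, Polynomial.eval_C, Polynomial.eval_pow, Polynomial.eval_X,
    Finset.prod_const, Finset.card_compl, Fintype.card_fin, mul_comm]

open Polynomial in
lemma coeff_polyP {n : ℕ} {R : Type*} [CommRing R] (M : Matrix (Fin n) (Fin n) R)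
    (k : ℕ) (hk : k ≤ n) :
    (polyP M).coeff (n - k) = ∑ γ ∈ Finset.univ.filter (fun γ : Finset (Fin n) => γ.card = k),
      pminor M γ := by
  rw [polyP, Polynomial.finset_sum_coeff]
  rw [Finset.sum_filter]
  refine Finset.sum_congr rfl fun γ _ => ?_
  rw [Polynomial.coeff_C_mul, Polynomial.coeff_X_pow]
  have hcard : γ.card ≤ n := by simpa using Finset.card_le_card (Finset.subset_univ γ)
  by_cases h : γ.card = k
  · simp [h]
  · have : ¬ (n - γ.card = n - k) := by omega
    rw [if_neg (fun habs => this habs.symm), mul_zero, if_neg h]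

open Polynomial in
lemma natDegree_polyP_le {n : ℕ} {R : Type*} [CommRing R] [Nontrivial R] (M : Matrix (Fin n) (Fin n) R) :
    (polyP M).natDegree ≤ n := by
  refine Polynomial.natDegree_sum_le_of_forall_le _ _ fun γ _ => ?_
  refine le_trans (Polynomial.natDegree_C_mul_le _ _) ?_
  rw [Polynomial.natDegree_X_pow]
  exact Nat.sub_le n γ.card

open Polynomial in
lemma coeff_polyP_n {n : ℕ} {R : Type*} [CommRing R] (M : Matrix (Fin n) (Fin n) R) :
    (polyP M).coeff n = 1 := by
  have := coeff_polyP M 0 (Nat.zero_le n)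
  rw [Nat.sub_zero] at this
  rw [this]
  rw [Finset.sum_filter]
  rw [Finset.sum_eq_single (∅ : Finset (Fin n))]
  · simp [pminor_empty]
  · intro γ _ hne
    simp [Finset.card_eq_zero, hne]
  · simp

open Polynomial in
lemma monic_polyP {n : ℕ} {R : Type*} [CommRing R] [Nontrivial R]
    (M : Matrix (Fin n) (Fin n) R) : (polyP M).Monic := by
  have h1 := coeff_polyP_n M
  have h2 := natDegree_polyP_le M
  have hne : polyP M ≠ 0 := fun h => by simp [h] at h1
  have hdeg : (polyP M).natDegree = n := by
    refine le_antisymm h2 (Polynomial.le_natDegree_of_ne_zero ?_)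
    rw [h1]; exact one_ne_zero
  rw [Polynomial.Monic, Polynomial.leadingCoeff, hdeg, h1]

lemma det_ne_zero_of_stable {n : ℕ} {M : Matrix (Fin n) (Fin n) ℝ} (hM : IsPosStable M)
    {t : ℝ} (ht : 0 ≤ t) : (M + Matrix.diagonal (fun _ : Fin n => t)).det ≠ 0 := by
  intro h0
  have hC : (M.map (fun x => (x : ℂ)) + Matrix.diagonal (fun _ : Fin n => (t : ℂ))).det = 0 := by
    have : (M + Matrix.diagonal (fun _ : Fin n => t)).map (fun x => (x : ℂ))
        = M.map (fun x => (x : ℂ)) + Matrix.diagonal (fun _ : Fin n => (t : ℂ)) := by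
      ext i j
      by_cases h : i = j <;> simp [Matrix.diagonal, h]
    rw [← this]
    have h2 : ((M + Matrix.diagonal fun _ : Fin n => t).map fun x => (x : ℂ))
        = (RingHom.mapMatrix (algebraMap ℝ ℂ)) (M + Matrix.diagonal fun _ : Fin n => t) := rfl
    rw [h2, ← RingHom.map_det, h0, map_zero]
  have hspec : (-(t : ℂ)) ∈ spectrum ℂ (M.map (fun x => (x : ℂ))) := by
    rw [spectrum.mem_iff]
    intro hu
    rw [Matrix.isUnit_iff_isUnit_det] at hu
    have : (algebraMap ℂ (Matrix (Fin n) (Fin n) ℂ)) (-(t:ℂ)) - M.map (fun x => (x : ℂ))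
        = -(M.map (fun x => (x : ℂ)) + Matrix.diagonal (fun _ : Fin n => (t : ℂ))) := by
      rw [Matrix.algebraMap_eq_diagonal]
      ext i j
      by_cases h : i = j <;> simp [Matrix.diagonal, h, Pi.algebraMap_apply] <;> ring
    rw [this, Matrix.det_neg, hC, mul_zero] at hu
    exact (not_isUnit_zero : ¬ IsUnit (0:ℂ)) hu
  have := hM _ hspec
  simp at this
  linarith

lemma det_pos_of_stable {n : ℕ} {M : Matrix (Fin n) (Fin n) ℝ} (hM : IsPosStable M)
    {t : ℝ} (ht : 0 ≤ t) : 0 < (M + Matrix.diagonal (fun _ : Fin n => t)).det := by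
  rcases Nat.eq_zero_or_pos n with hn | hn
  · subst hn
    have : IsEmpty (Fin 0) := by infer_instance
    rw [Matrix.det_isEmpty]; norm_num
  -- h(s) := eval s (polyP M) = det (M + s I), nonzero on [0,∞), monic so → ∞
  set p := polyP M with hp
  have hmono : p.Monic := monic_polyP M
  have hdeg : p.natDegree = n := by
    refine le_antisymm (natDegree_polyP_le M) (Polynomial.le_natDegree_of_ne_zero ?_)
    rw [hp, coeff_polyP_n]; exact one_ne_zero
  have hne : ∀ s : ℝ, 0 ≤ s → p.eval s ≠ 0 := by
    intro s hs
    rw [hp, eval_polyP]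
    exact det_ne_zero_of_stable hM hs
  have htop : Filter.Tendsto (fun s => p.eval s) Filter.atTop Filter.atTop := by
    refine Polynomial.tendsto_atTop_of_leadingCoeff_nonneg p ?_ ?_
    · rw [Polynomial.degree_eq_natDegree hmono.ne_zero, hdeg]
      exact_mod_cast hn
    · rw [hmono.leadingCoeff]; norm_num
  obtain ⟨T, hT⟩ := (htop.eventually_ge_atTop 1).exists_forall_of_atTop
  rw [← eval_polyP]
  by_contra hle
  push_neg at hle
  rcases lt_or_eq_of_le hle with hlt | heq
  · -- p.eval t < 0, p.eval T' ≥ 1 for some big T' ≥ t: IVT gives a root ≥ 0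
    set T' := max T t with hT'
    have h1 : (1:ℝ) ≤ p.eval T' := hT T' (le_max_left _ _)
    have hcont : ContinuousOn (fun s => p.eval s) (Set.Icc t T') :=
      (Polynomial.continuous p).continuousOn
    have hsub := intermediate_value_Icc (le_max_right T t) hcont
    have h0mem : (0:ℝ) ∈ Set.Icc (p.eval t) (p.eval T') := ⟨le_of_lt hlt, by linarith⟩
    obtain ⟨c, hc, hc0⟩ := hsub h0mem
    exact hne c (le_trans ht hc.1) hc0
  · exact hne t ht heq

lemma det_pos_of_DStable {n : ℕ} {A : Matrix (Fin n) (Fin n) ℝ} (hA : IsDStable A)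
    {d τ : Fin n → ℝ} (hd : ∀ i, 0 < d i) (hτ : ∀ i, 0 < τ i) :
    0 < (Matrix.diagonal d * A + Matrix.diagonal τ).det := by
  have hfac : Matrix.diagonal d * A + Matrix.diagonal τ
      = Matrix.diagonal τ * (Matrix.diagonal (fun i => d i / τ i) * A
          + Matrix.diagonal (fun _ : Fin n => (1:ℝ))) := by
    have hdd : (fun i => τ i * (d i / τ i)) = d := by
      funext i
      have := (hτ i).ne'
      field_simp
    rw [mul_add, ← Matrix.mul_assoc, Matrix.diagonal_mul_diagonal, hdd, Matrix.diagonal_one,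
      Matrix.mul_one]
  rw [hfac, Matrix.det_mul, Matrix.det_diagonal]
  have h1 : 0 < ∏ i, τ i := Finset.prod_pos fun i _ => hτ i
  have h2 : IsPosStable (Matrix.diagonal (fun i => d i / τ i) * A) :=
    hA _ (fun i => div_pos (hd i) (hτ i))
  exact mul_pos h1 (det_pos_of_stable h2 zero_le_one)

lemma pminor_nonneg {n : ℕ} {A : Matrix (Fin n) (Fin n) ℝ} (hA : IsDStable A)
    (γ : Finset (Fin n)) : 0 ≤ pminor A γ := by
  classical
  set F : ℝ → Matrix (Fin n) (Fin n) ℝ := fun ε =>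
    Matrix.diagonal (fun i => if i ∈ γ then 1 else ε) * A
      + Matrix.diagonal (fun i => if i ∈ γ then ε else 1) with hF
  have hpos : ∀ ε ∈ Set.Ioi (0:ℝ), 0 ≤ (F ε).det := by
    intro ε hε
    refine le_of_lt (det_pos_of_DStable hA (fun i => ?_) (fun i => ?_))
    · by_cases h : i ∈ γ <;> simp [h] <;> exact hε
    · by_cases h : i ∈ γ <;> simp [h] <;> exact hε
  have hF0 : (F 0).det = pminor A γ := by
    have h0 : F 0 = Matrix.of (fun i => if i ∈ γ then A i else (1 : Matrix (Fin n) (Fin n) ℝ) i) := by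
      ext i j
      by_cases h : i ∈ γ <;> by_cases h2 : i = j <;>
        (try subst h2) <;>
        simp_all [hF, Matrix.mul_apply, Matrix.diagonal, Matrix.one_apply,
          Finset.sum_ite_eq]
    rw [h0, det_piecewise]
  have hcont : Continuous fun ε => (F ε).det := by
    refine Continuous.matrix_det ?_
    refine Continuous.add ?_ ?_
    · refine Continuous.matrix_mul ?_ continuous_const
      refine Continuous.matrix_diagonal ?_
      refine continuous_pi fun i => ?_
      by_cases h : i ∈ γ <;> simp [h] <;> fun_prop
    · refine Continuous.matrix_diagonal ?_
      refine continuous_pi fun i => ?_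
      by_cases h : i ∈ γ <;> simp [h] <;> fun_prop
  have htend : Filter.Tendsto (fun ε => (F ε).det) (nhdsWithin 0 (Set.Ioi 0)) (nhds ((F 0).det)) :=
    (hcont.tendsto 0).mono_left nhdsWithin_le_nhds
  have := ge_of_tendsto htend (eventually_nhdsWithin_of_forall hpos)
  rw [hF0] at this
  exact this

open Polynomial in
lemma isRoot_conj_of_real {p : Polynomial ℝ} {z : ℂ}
    (h : (p.map (algebraMap ℝ ℂ)).IsRoot z) :
    (p.map (algebraMap ℝ ℂ)).IsRoot ((starRingEnd ℂ) z) := by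
  have hmap : (p.map (algebraMap ℝ ℂ)).map (starRingEnd ℂ) = p.map (algebraMap ℝ ℂ) := by
    rw [Polynomial.map_map]
    congr 1
    ext r
    simp
  have : ((p.map (algebraMap ℝ ℂ)).map (starRingEnd ℂ)).eval ((starRingEnd ℂ) z)
      = (starRingEnd ℂ) ((p.map (algebraMap ℝ ℂ)).eval z) := by
    rw [Polynomial.eval_map, Polynomial.eval₂_at_apply]
  rw [Polynomial.IsRoot, ← hmap, this, h.eq_zero, map_zero]

open Polynomial in
lemma hurwitz : ∀ m : ℕ, ∀ p : Polynomial ℝ, p.Monic → p.natDegree = m →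
    (∀ z : ℂ, (p.map (algebraMap ℝ ℂ)).IsRoot z → z.re < 0) →
    ∀ j ≤ m, 0 < p.coeff j := by
  intro m
  induction m using Nat.strong_induction_on with
  | _ m IH =>
  intro p hm hdeg hroots j hj
  rcases Nat.eq_zero_or_pos m with rfl | hmpos
  · have hp1 : p = 1 := hm.natDegree_eq_zero.mp hdeg
    interval_cases j
    simp [hp1]
  · have hmapmonic : (p.map (algebraMap ℝ ℂ)).Monic := hm.map _
    have hdegC : 0 < (p.map (algebraMap ℝ ℂ)).degree := by
      rw [Polynomial.degree_eq_natDegree hmapmonic.ne_zero]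
      rw [hm.natDegree_map, hdeg]
      exact_mod_cast hmpos
    obtain ⟨z, hz⟩ := Complex.exists_root hdegC
    have hzre : z.re < 0 := hroots z hz
    by_cases him : z.im = 0
    · -- real root case
      have hzeq : z = ((z.re : ℝ) : ℂ) := by
        apply Complex.ext <;> simp [him]
      have hroot : p.IsRoot z.re := by
        have h1 : ((p.eval z.re : ℝ) : ℂ) = 0 := by
          rw [show ((p.eval z.re : ℝ) : ℂ) = (algebraMap ℝ ℂ) (p.eval z.re) from rfl,
            ← Polynomial.eval₂_at_apply, ← Polynomial.eval_map, Complex.coe_algebraMap, ← hzeq]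
          exact hz
        exact_mod_cast h1
      obtain ⟨q, hqeq⟩ := Polynomial.dvd_iff_isRoot.mpr hroot
      have hqne : q ≠ 0 := by
        intro h; rw [h, mul_zero] at hqeq; exact hm.ne_zero hqeq
      have hqmonic : q.Monic := by
        have := Polynomial.leadingCoeff_mul (X - C z.re) q
        rw [← hqeq, hm.leadingCoeff, (Polynomial.monic_X_sub_C z.re).leadingCoeff, one_mul] at this
        exact this.symm
      have hqdeg : q.natDegree = m - 1 := by
        have := Polynomial.natDegree_mul (Polynomial.monic_X_sub_C z.re).ne_zero hqne
        rw [← hqeq, hdeg, Polynomial.natDegree_X_sub_C] at this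
        omega
      have hqroots : ∀ w : ℂ, (q.map (algebraMap ℝ ℂ)).IsRoot w → w.re < 0 := by
        intro w hw
        refine hroots w ?_
        rw [hqeq, Polynomial.map_mul, Polynomial.IsRoot, Polynomial.eval_mul, hw.eq_zero,
          mul_zero]
      have hIH := IH (m - 1) (by omega) q hqmonic hqdeg hqroots
      have hqnn : ∀ i, 0 ≤ q.coeff i := by
        intro i
        by_cases hi : i ≤ m - 1
        · exact (hIH i hi).le
        · rw [Polynomial.coeff_eq_zero_of_natDegree_lt (by omega)]
      set a : ℝ := -z.re with ha
      have hapos : 0 < a := by simp [ha]; linarith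
      have hcoeff : ∀ i, p.coeff i = (if i = 0 then 0 else q.coeff (i - 1)) + a * q.coeff i := by
        intro i
        have hXa : X - C z.re = X + C a := by
          rw [ha, map_neg, sub_eq_add_neg]
        rw [hqeq, hXa, add_mul, Polynomial.coeff_add, Polynomial.coeff_C_mul]
        congr 1
        cases i with
        | zero => simp [Polynomial.mul_coeff_zero]
        | succ i => simp [Polynomial.coeff_X_mul]
      rw [hcoeff j]
      cases Nat.eq_zero_or_pos j with
      | inl h0 =>
        subst h0
        have := hIH 0 (Nat.zero_le _)
        simp [mul_pos hapos this]
      | inr hjpos =>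
        have h1 : 0 < q.coeff (j - 1) := hIH (j - 1) (by omega)
        have h2 : 0 ≤ a * q.coeff j := mul_nonneg hapos.le (hqnn j)
        rw [if_neg (by omega)]
        linarith
    · -- complex root case
      have hconj : (p.map (algebraMap ℝ ℂ)).IsRoot ((starRingEnd ℂ) z) := isRoot_conj_of_real hz
      obtain ⟨q₁, hq₁⟩ := Polynomial.dvd_iff_isRoot.mpr hz
      have hzne : (starRingEnd ℂ) z - z ≠ 0 := by
        intro h
        apply him
        have := congrArg Complex.im h
        simp at this
        linarith
      have hq₁root : q₁.IsRoot ((starRingEnd ℂ) z) := by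
        have := hconj.eq_zero
        rw [hq₁, Polynomial.eval_mul, Polynomial.eval_sub, Polynomial.eval_X,
          Polynomial.eval_C] at this
        rcases mul_eq_zero.mp this with h | h
        · exact absurd h hzne
        · exact h
      obtain ⟨q₂, hq₂⟩ := Polynomial.dvd_iff_isRoot.mpr hq₁root
      set c1 : ℝ := -(2 * z.re) with hc1
      set c0 : ℝ := Complex.normSq z with hc0
      set s : Polynomial ℝ := X ^ 2 + C c1 * X + C c0 with hs
      have hsmap : s.map (algebraMap ℝ ℂ) = (X - C z) * (X - C ((starRingEnd ℂ) z)) := by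
        have e1 : ((c1 : ℝ) : ℂ) = -(z + (starRingEnd ℂ) z) := by
          rw [hc1, Complex.add_conj]; push_cast; ring
        have e2 : ((c0 : ℝ) : ℂ) = z * (starRingEnd ℂ) z := by
          rw [hc0, (Complex.mul_conj z)]
        rw [hs]
        simp only [Polynomial.map_add, Polynomial.map_mul, Polynomial.map_pow,
          Polynomial.map_X, Polynomial.map_C, Complex.coe_algebraMap]
        rw [e1, e2]
        simp only [_root_.map_neg, _root_.map_add, _root_.map_mul]
        ring
      have hsdvd : s ∣ p := by
        rw [← Polynomial.map_dvd_map' (algebraMap ℝ ℂ), hsmap, hq₁, hq₂]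
        exact ⟨q₂, by ring⟩
      obtain ⟨q, hqeq⟩ := hsdvd
      have hlow : (C c1 * X + C c0).degree < ((2 : ℕ) : WithBot ℕ) :=
        lt_of_le_of_lt Polynomial.degree_linear_le (by exact_mod_cast one_lt_two)
      have hseq : s = X ^ 2 + (C c1 * X + C c0) := by rw [hs, add_assoc]
      have hsmonic : s.Monic := by
        rw [hseq]
        exact Polynomial.monic_X_pow_add hlow
      have hsdeg : s.natDegree = 2 := by
        have h1 : s.degree = 2 := by
          rw [hseq, Polynomial.degree_add_eq_left_of_degree_lt]
          · exact Polynomial.degree_X_pow 2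
          · rw [Polynomial.degree_X_pow]; exact hlow
        exact Polynomial.natDegree_eq_of_degree_eq_some h1
      have hqne : q ≠ 0 := by
        intro h; rw [h, mul_zero] at hqeq; exact hm.ne_zero hqeq
      have hqmonic : q.Monic := by
        have := Polynomial.leadingCoeff_mul s q
        rw [← hqeq, hm.leadingCoeff, hsmonic.leadingCoeff, one_mul] at this
        exact this.symm
      have hm2 : 2 ≤ m := by
        have := Polynomial.natDegree_mul hsmonic.ne_zero hqne
        rw [← hqeq, hdeg, hsdeg] at this
        omega
      have hqdeg : q.natDegree = m - 2 := by
        have := Polynomial.natDegree_mul hsmonic.ne_zero hqne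
        rw [← hqeq, hdeg, hsdeg] at this
        omega
      have hqroots : ∀ w : ℂ, (q.map (algebraMap ℝ ℂ)).IsRoot w → w.re < 0 := by
        intro w hw
        refine hroots w ?_
        rw [hqeq, Polynomial.map_mul, Polynomial.IsRoot, Polynomial.eval_mul, hw.eq_zero,
          mul_zero]
      have hIH := IH (m - 2) (by omega) q hqmonic hqdeg hqroots
      have hqnn : ∀ i, 0 ≤ q.coeff i := by
        intro i
        by_cases hi : i ≤ m - 2
        · exact (hIH i hi).le
        · rw [Polynomial.coeff_eq_zero_of_natDegree_lt (by omega)]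
      have hc1pos : 0 < c1 := by rw [hc1]; linarith
      have hc0pos : 0 < c0 := by
        rw [hc0]
        refine Complex.normSq_pos.mpr ?_
        intro h; rw [h] at hzre; simp at hzre
      have hpeq : p = q * X ^ 2 + C c1 * (q * X ^ 1) + C c0 * q := by
        rw [hqeq, hs]; ring
      have hcoeff : p.coeff j = (if 2 ≤ j then q.coeff (j - 2) else 0)
          + c1 * (if 1 ≤ j then q.coeff (j - 1) else 0) + c0 * q.coeff j := by
        rw [hpeq, Polynomial.coeff_add, Polynomial.coeff_add, Polynomial.coeff_C_mul,
          Polynomial.coeff_C_mul, Polynomial.coeff_mul_X_pow', Polynomial.coeff_mul_X_pow']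
      rw [hcoeff]
      have hnn2 : 0 ≤ (if 2 ≤ j then q.coeff (j - 2) else 0) := by
        split
        · exact hqnn _
        · exact le_rfl
      have hnn1 : 0 ≤ c1 * (if 1 ≤ j then q.coeff (j - 1) else 0) := by
        refine mul_nonneg hc1pos.le ?_
        split
        · exact hqnn _
        · exact le_rfl
      have hnn0 : 0 ≤ c0 * q.coeff j := mul_nonneg hc0pos.le (hqnn j)
      rcases show j ≤ m - 2 ∨ j = m - 1 ∨ j = m by omega with hcase | hcase | hcase
      · have : 0 < c0 * q.coeff j := mul_pos hc0pos (hIH j hcase)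
        linarith
      · have h1le : 1 ≤ j := by omega
        have : 0 < c1 * q.coeff (j - 1) := mul_pos hc1pos (hIH (j - 1) (by omega))
        rw [if_pos h1le]
        linarith
      · have h2le : 2 ≤ j := by omega
        have : 0 < q.coeff (j - 2) := hIH (j - 2) (by omega)
        rw [if_pos h2le]
        linarith

lemma neg_mem_spectrum_of_det_eq_zero {n : ℕ} (B : Matrix (Fin n) (Fin n) ℂ) (z : ℂ)
    (h : (B + Matrix.diagonal (fun _ : Fin n => z)).det = 0) : -z ∈ spectrum ℂ B := by
  rw [spectrum.mem_iff]
  intro hu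
  rw [Matrix.isUnit_iff_isUnit_det] at hu
  have heq : (algebraMap ℂ (Matrix (Fin n) (Fin n) ℂ)) (-z) - B
      = -(B + Matrix.diagonal (fun _ : Fin n => z)) := by
    rw [Matrix.algebraMap_eq_diagonal]
    ext i j
    by_cases hij : i = j <;> simp [Matrix.diagonal, hij, Pi.algebraMap_apply] <;> ring
  rw [heq, Matrix.det_neg, h, mul_zero] at hu
  exact not_isUnit_zero hu

lemma pminor_map {n : ℕ} {R S : Type*} [CommRing R] [CommRing S] (f : R →+* S)
    (M : Matrix (Fin n) (Fin n) R) (γ : Finset (Fin n)) :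
    pminor (M.map f) γ = f (pminor M γ) := by
  unfold pminor
  rw [show (M.map f).submatrix (fun i : {x // x ∈ γ} => (i : Fin n))
        (fun j : {x // x ∈ γ} => (j : Fin n))
      = ((M.submatrix (fun i : {x // x ∈ γ} => (i : Fin n))
        (fun j : {x // x ∈ γ} => (j : Fin n))).map f) from rfl]
  rw [← RingHom.mapMatrix_apply, ← RingHom.map_det]

open Polynomial in
lemma polyP_map {n : ℕ} {R S : Type*} [CommRing R] [CommRing S] (f : R →+* S)
    (M : Matrix (Fin n) (Fin n) R) :
    (polyP M).map f = polyP (M.map f) := by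
  unfold polyP
  rw [Polynomial.map_sum]
  refine Finset.sum_congr rfl fun γ _ => ?_
  rw [Polynomial.map_mul, Polynomial.map_C, Polynomial.map_pow, Polynomial.map_X, pminor_map]

theorem stmt19 (n : ℕ) (A : Matrix (Fin n) (Fin n) ℝ) (hA : IsDStable A) :
    (∀ γ : Finset (Fin n), γ.Nonempty → 0 ≤ pminor A γ) ∧
    (∀ k : ℕ, 1 ≤ k → k ≤ n →
      0 < ∑ γ ∈ Finset.univ.filter (fun γ : Finset (Fin n) => γ.card = k), pminor A γ) := by
  constructor
  · intro γ _
    exact pminor_nonneg hA γ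
  · intro k hk1 hkn
    have hAstable : IsPosStable A := by
      have := hA (fun _ => 1) (fun _ => one_pos)
      rwa [Matrix.diagonal_one, Matrix.one_mul] at this
    have hroots : ∀ z : ℂ, ((polyP A).map (algebraMap ℝ ℂ)).IsRoot z → z.re < 0 := by
      intro z hz
      rw [Polynomial.IsRoot, polyP_map, eval_polyP] at hz
      have hmem := neg_mem_spectrum_of_det_eq_zero _ _ hz
      have hAeq : A.map (algebraMap ℝ ℂ) = A.map (fun x => (x : ℂ)) := rfl
      rw [hAeq] at hmem
      have := hAstable _ hmem
      simp at this
      linarith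
    have hdeg : (polyP A).natDegree = n := by
      refine le_antisymm (natDegree_polyP_le A) (Polynomial.le_natDegree_of_ne_zero ?_)
      rw [coeff_polyP_n]; exact one_ne_zero
    have := hurwitz n (polyP A) (monic_polyP A) hdeg hroots (n - k) (by omega)
    rwa [coeff_polyP A k hkn] at this
end
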